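/- arXiv:2102.04151 — 5 statements merged into one kernel-verified Lean document; each statement's English description precedes it below -/
import Mathlib

section
/- Let 𝒴 and 𝒰 be Polish spaces, P a Borel probability measure on 𝒴, ν a Borel probability measure on 𝒰, and D ⊆ 𝒴 × 𝒰 a Borel set. Then the supremum, over pairs of Borel measurable functions f : 𝒴 → [0,1] and g : 𝒰 → [−1,0] satisfying f(y) + g(u) ≤ 1_D(y,u) for all (y,u), of ∫ f dP + ∫ g dν, equals the supremum over pairs of Borel sets A ⊆ 𝒴 and B ⊆ 𝒰 with A × B ⊆ D of P(A) − 1 + ν(B). -/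
open MeasureTheory Set

/-!
By the layer-cake formula, `∫ f dμ + ∫ g dν = ∫₀¹ (μ {f ≥ t} - 1 + ν {g > -t}) dt`, and for every
`t` the rectangle `{f ≥ t} ×ˢ {g > -t}` lies in `D`, because `f + g > 0` on it. So every value of
the objective is an average of rectangle values. Conversely, `(1_A, 1_B - 1)` is feasible for every
rectangle `A ×ˢ B ⊆ D`.
-/

section

variable {α β : Type*} [MeasurableSpace α] [MeasurableSpace β]

def dualObjectiveValues (μ : Measure α) (ν : Measure β) (D : Set (α × β)) : Set ℝ :=
  {x | ∃ (f : α → ℝ) (g : β → ℝ), Measurable f ∧ Measurable g ∧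
    (∀ a, f a ∈ Icc (0:ℝ) 1) ∧ (∀ b, g b ∈ Icc (-1:ℝ) 0) ∧
    (∀ a b, f a + g b ≤ D.indicator (fun _ => (1:ℝ)) (a, b)) ∧
    x = ∫ a, f a ∂μ + ∫ b, g b ∂ν}

def rectangleValues (μ : Measure α) (ν : Measure β) (D : Set (α × β)) : Set ℝ :=
  {x | ∃ (A : Set α) (B : Set β), MeasurableSet A ∧ MeasurableSet B ∧
    A ×ˢ B ⊆ D ∧ x = μ.real A - 1 + ν.real B}

theorem integral_eq_setIntegral_Ioc_measureReal_le (μ : Measure α) [IsFiniteMeasure μ]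
    {f : α → ℝ} (hf : Measurable f) (hf01 : ∀ a, f a ∈ Icc (0:ℝ) 1) :
    ∫ a, f a ∂μ = ∫ t in Ioc 0 1, μ.real {a | t ≤ f a} := by
  refine Integrable.integral_eq_integral_Ioc_meas_le ?_ (.of_forall fun a => (hf01 a).1)
    (.of_forall fun a => (hf01 a).2)
  refine .of_bound hf.aestronglyMeasurable 1 (.of_forall fun a => ?_)
  rw [Real.norm_of_nonneg (hf01 a).1]
  exact (hf01 a).2

theorem integrableOn_Ioc_measureReal_le (μ : Measure α) [IsFiniteMeasure μ] (f : α → ℝ)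
    (a b : ℝ) : IntegrableOn (fun t => μ.real {x | t ≤ f x}) (Ioc a b) :=
  have hanti : Antitone fun t => μ.real {x | t ≤ f x} := fun _ _ hst =>
    measureReal_mono fun _ hx => le_trans hst hx
  (hanti.intervalIntegrable (a := a) (b := b)).1

variable (μ : Measure α) (ν : Measure β) [IsProbabilityMeasure ν] {D : Set (α × β)}

theorem measureReal_le_sub_measureReal_le_neg_mem_rectangleValues {f : α → ℝ} {g : β → ℝ}
    (hf : Measurable f) (hg : Measurable g)
    (hfg : ∀ a b, f a + g b ≤ D.indicator (fun _ => (1:ℝ)) (a, b)) (t : ℝ) :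
    μ.real {a | t ≤ f a} - ν.real {b | t ≤ -g b} ∈ rectangleValues μ ν D := by
  have hB : MeasurableSet {b | -t < g b} := measurableSet_lt measurable_const hg
  refine ⟨{a | t ≤ f a}, {b | -t < g b}, measurableSet_le measurable_const hf, hB, ?_, ?_⟩
  · rintro ⟨a, b⟩ ⟨ha : t ≤ f a, hb : -t < g b⟩
    exact mem_of_indicator_ne_zero (f := fun _ => (1:ℝ)) (by linarith [hfg a b])
  · have hcompl : {b | t ≤ -g b} = {b | -t < g b}ᶜ := by
      ext b
      simp [le_neg]
    rw [hcompl, probReal_compl_eq_one_sub hB]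
    ring

theorem rectangleValues_subset_dualObjectiveValues :
    rectangleValues μ ν D ⊆ dualObjectiveValues μ ν D := by
  rintro _ ⟨A, B, hA, hB, hAB, rfl⟩
  refine ⟨A.indicator 1, fun b => B.indicator 1 b - 1, measurable_one.indicator hA,
    (measurable_one.indicator hB).sub measurable_const, fun a => ?_, fun b => ?_,
    fun a b => ?_, ?_⟩
  · by_cases ha : a ∈ A <;> simp [ha]
  · by_cases hb : b ∈ B <;> simp [hb]
  · have h0 : (0:ℝ) ≤ D.indicator (fun _ => 1) (a, b) :=
      indicator_nonneg (fun _ _ => zero_le_one) _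
    by_cases ha : a ∈ A <;> by_cases hb : b ∈ B
    · simp [ha, hb, hAB (mk_mem_prod ha hb)]
    all_goals simp [ha, hb]; linarith
  · rw [integral_sub ((integrable_const 1).indicator hB) (integrable_const 1),
      integral_indicator_one hA, integral_indicator_one hB]
    simp only [integral_const, probReal_univ, smul_eq_mul, mul_one]
    ring

variable [IsProbabilityMeasure μ]

theorem le_sSup_rectangleValues_of_mem_dualObjectiveValues {x : ℝ}
    (hx : x ∈ dualObjectiveValues μ ν D) : x ≤ sSup (rectangleValues μ ν D) := by
  obtain ⟨f, g, hf, hg, hf01, hg01, hfg, rfl⟩ := hx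
  have hg01' : ∀ b, -g b ∈ Icc (0:ℝ) 1 := fun b =>
    ⟨by linarith [(hg01 b).2], by linarith [(hg01 b).1]⟩
  have hbdd : BddAbove (rectangleValues μ ν D) := by
    refine ⟨1, ?_⟩
    rintro _ ⟨A, B, -, -, -, rfl⟩
    linarith [measureReal_le_one (μ := μ) (s := A), measureReal_le_one (μ := ν) (s := B)]
  calc ∫ a, f a ∂μ + ∫ b, g b ∂ν
      = (∫ t in Ioc 0 1, μ.real {a | t ≤ f a}) - ∫ t in Ioc 0 1, ν.real {b | t ≤ -g b} := by
        rw [integral_eq_setIntegral_Ioc_measureReal_le μ hf hf01, ← neg_neg (∫ b, g b ∂ν),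
          ← integral_neg,
          integral_eq_setIntegral_Ioc_measureReal_le ν (f := fun b => -g b) hg.neg hg01',
          ← sub_eq_add_neg]
    _ = ∫ t in Ioc 0 1, (μ.real {a | t ≤ f a} - ν.real {b | t ≤ -g b}) :=
        (integral_sub (integrableOn_Ioc_measureReal_le μ f 0 1)
          (integrableOn_Ioc_measureReal_le ν (fun b => -g b) 0 1)).symm
    _ ≤ ∫ _ in Ioc (0:ℝ) 1, sSup (rectangleValues μ ν D) :=
        setIntegral_mono_on ((integrableOn_Ioc_measureReal_le μ f 0 1).sub
          (integrableOn_Ioc_measureReal_le ν (fun b => -g b) 0 1)) (integrableOn_const (by simp))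
          measurableSet_Ioc fun t _ => le_csSup hbdd
            (measureReal_le_sub_measureReal_le_neg_mem_rectangleValues μ ν hf hg hfg t)
    _ = sSup (rectangleValues μ ν D) := by simp

end

theorem stmt_4_general {𝒴 𝒰 : Type*}
    [MeasurableSpace 𝒴] [MeasurableSpace 𝒰]
    (P : Measure 𝒴) [IsProbabilityMeasure P] (ν : Measure 𝒰) [IsProbabilityMeasure ν]
    (D : Set (𝒴 × 𝒰)) :
    sSup {x : ℝ | ∃ (f : 𝒴 → ℝ) (g : 𝒰 → ℝ), Measurable f ∧ Measurable g ∧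
        (∀ y, f y ∈ Icc (0:ℝ) 1) ∧ (∀ u, g u ∈ Icc (-1:ℝ) 0) ∧
        (∀ y u, f y + g u ≤ D.indicator (fun _ => (1:ℝ)) (y, u)) ∧
        x = ∫ y, f y ∂P + ∫ u, g u ∂ν} =
    sSup {x : ℝ | ∃ (A : Set 𝒴) (B : Set 𝒰), MeasurableSet A ∧ MeasurableSet B ∧
        A ×ˢ B ⊆ D ∧ x = (P A).toReal - 1 + (ν B).toReal} := by
  change sSup (dualObjectiveValues P ν D) = sSup (rectangleValues P ν D)
  have hne : (rectangleValues P ν D).Nonempty := ⟨_, ∅, ∅, .empty, .empty, by simp, rfl⟩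
  have hsub := rectangleValues_subset_dualObjectiveValues P ν (D := D)
  have hle : ∀ x ∈ dualObjectiveValues P ν D, x ≤ sSup (rectangleValues P ν D) :=
    fun _ => le_sSup_rectangleValues_of_mem_dualObjectiveValues P ν
  exact le_antisymm (csSup_le (hne.mono hsub) hle) (csSup_le_csSup ⟨_, hle⟩ hne hsub)

/-- indicator-reduction step in the proof of Proposition 1: for Polish
spaces 𝒴, 𝒰, Borel probability measures P, ν, and a Borel set D ⊆ 𝒴 × 𝒰, the supremum
of ∫ f dP + ∫ g dν over Borel measurable f : 𝒴 → [0,1] and g : 𝒰 → [−1,0] with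
f(y) + g(u) ≤ 1_D(y,u) for all (y,u) equals the supremum over pairs of Borel sets
A ⊆ 𝒴, B ⊆ 𝒰 with A × B ⊆ D of P(A) − 1 + ν(B). -/
theorem stmt_4 {𝒴 𝒰 : Type*}
    [TopologicalSpace 𝒴] [PolishSpace 𝒴] [MeasurableSpace 𝒴] [BorelSpace 𝒴]
    [TopologicalSpace 𝒰] [PolishSpace 𝒰] [MeasurableSpace 𝒰] [BorelSpace 𝒰]
    (P : Measure 𝒴) [IsProbabilityMeasure P] (ν : Measure 𝒰) [IsProbabilityMeasure ν]
    (D : Set (𝒴 × 𝒰)) (hD : MeasurableSet D) :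
    sSup {x : ℝ | ∃ (f : 𝒴 → ℝ) (g : 𝒰 → ℝ), Measurable f ∧ Measurable g ∧
        (∀ y, f y ∈ Icc (0:ℝ) 1) ∧ (∀ u, g u ∈ Icc (-1:ℝ) 0) ∧
        (∀ y u, f y + g u ≤ D.indicator (fun _ => (1:ℝ)) (y, u)) ∧
        x = ∫ y, f y ∂P + ∫ u, g u ∂ν} =
    sSup {x : ℝ | ∃ (A : Set 𝒴) (B : Set 𝒰), MeasurableSet A ∧ MeasurableSet B ∧
        A ×ˢ B ⊆ D ∧ x = (P A).toReal - 1 + (ν B).toReal} :=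
  stmt_4_general P ν D
end

section
/- Let (P, Γ, ν) be a structure and let D = {(y,u) ∈ ℝ^{d_y} × ℝ^{d_u} : u ∉ Γ(y)}. Then the supremum over pairs of Borel sets A ⊆ ℝ^{d_y}, B ⊆ ℝ^{d_u} with A × B ⊆ D of P(A) − 1 + ν(B) equals the supremum over Borel sets A ⊆ ℝ^{d_y} of P(A) − ν(Γ(A)), where ν(Γ(A)) is the ν-outer measure of Γ(A). -/
open MeasureTheory Set

/-- for a structure (P, Γ, ν), with D = {(y,u) : u ∉ Γ(y)}, the supremum
over pairs of Borel sets A, B with A × B ⊆ D of P(A) − 1 + ν(B) equals the supremum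
over Borel sets A of P(A) − ν(Γ(A)), where ν(Γ(A)) is the ν-outer measure of
Γ(A) = ⋃_{a ∈ A} Γ(a). -/
theorem stmt_5 {dy du : ℕ}
    (P : Measure (Fin dy → ℝ)) [IsProbabilityMeasure P]
    (ν : Measure (Fin du → ℝ)) [IsProbabilityMeasure ν]
    (Γ : (Fin dy → ℝ) → Set (Fin du → ℝ))
    (hΓmeas : ∀ O : Set (Fin du → ℝ), IsOpen O → MeasurableSet {y | (Γ y ∩ O).Nonempty})
    (hΓne : ∀ y, (Γ y).Nonempty) (hΓcl : ∀ y, IsClosed (Γ y))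
    (D : Set ((Fin dy → ℝ) × (Fin du → ℝ)))
    (hD : D = {p : (Fin dy → ℝ) × (Fin du → ℝ) | p.2 ∉ Γ p.1}) :
    sSup {x : ℝ | ∃ (A : Set (Fin dy → ℝ)) (B : Set (Fin du → ℝ)),
        MeasurableSet A ∧ MeasurableSet B ∧ A ×ˢ B ⊆ D ∧
        x = (P A).toReal - 1 + (ν B).toReal} =
    sSup {x : ℝ | ∃ A : Set (Fin dy → ℝ), MeasurableSet A ∧
        x = (P A).toReal - (ν (⋃ a ∈ A, Γ a)).toReal} := by
  set L := {x : ℝ | ∃ (A : Set (Fin dy → ℝ)) (B : Set (Fin du → ℝ)),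
      MeasurableSet A ∧ MeasurableSet B ∧ A ×ˢ B ⊆ D ∧
      x = (P A).toReal - 1 + (ν B).toReal} with hL
  set R := {x : ℝ | ∃ A : Set (Fin dy → ℝ), MeasurableSet A ∧
      x = (P A).toReal - (ν (⋃ a ∈ A, Γ a)).toReal} with hR
  -- R ⊆ L
  have hRL : R ⊆ L := by
    rintro x ⟨A, hA, rfl⟩
    obtain ⟨S, hSsub, hSmeas, hSeq⟩ := exists_measurable_superset ν (⋃ a ∈ A, Γ a)
    refine ⟨A, Sᶜ, hA, hSmeas.compl, ?_, ?_⟩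
    · rintro ⟨y, u⟩ ⟨hy, hu⟩
      simp only [hD, Set.mem_setOf_eq]
      intro huΓ
      exact hu (hSsub (Set.mem_biUnion hy huΓ))
    · have hcompl : (ν Sᶜ).toReal = 1 - (ν S).toReal := by
        rw [measure_compl hSmeas (measure_ne_top ν S), measure_univ,
          ENNReal.toReal_sub_of_le prob_le_one ENNReal.one_ne_top, ENNReal.toReal_one]
      rw [hcompl, hSeq]; ring
  have hRne : R.Nonempty := ⟨_, ∅, MeasurableSet.empty, rfl⟩
  have hRbdd : BddAbove R := by
    refine ⟨1, ?_⟩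
    rintro x ⟨A, hA, rfl⟩
    have h1 : (P A).toReal ≤ 1 := by
      have := prob_le_one (μ := P) (s := A)
      simpa using ENNReal.toReal_mono ENNReal.one_ne_top this
    have h2 : 0 ≤ (ν (⋃ a ∈ A, Γ a)).toReal := ENNReal.toReal_nonneg
    linarith
  refine le_antisymm ?_ (csSup_le_csSup ?_ hRne hRL)
  · -- sSup L ≤ sSup R
    refine csSup_le ⟨_, hRL hRne.some_mem⟩ ?_
    rintro x ⟨A, B, hA, hB, hAB, rfl⟩
    refine le_trans ?_ (le_csSup hRbdd ⟨A, hA, rfl⟩)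
    -- ν(Γ(A)) ≤ ν(Bᶜ) = 1 - ν(B)
    have hsub : (⋃ a ∈ A, Γ a) ⊆ Bᶜ := by
      rintro u hu hub
      obtain ⟨a, ha, hua⟩ := Set.mem_iUnion₂.1 hu
      have := hAB (Set.mk_mem_prod ha hub)
      rw [hD] at this
      exact this hua
    have hle : (ν (⋃ a ∈ A, Γ a)).toReal ≤ (ν Bᶜ).toReal :=
      ENNReal.toReal_mono (measure_ne_top ν _) (measure_mono hsub)
    have hcompl : (ν Bᶜ).toReal = 1 - (ν B).toReal := by
      rw [measure_compl hB (measure_ne_top ν B), measure_univ,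
        ENNReal.toReal_sub_of_le prob_le_one ENNReal.one_ne_top, ENNReal.toReal_one]
    rw [hcompl] at hle
    linarith
  · -- BddAbove L
    refine ⟨1, ?_⟩
    rintro x ⟨A, B, hA, hB, hAB, rfl⟩
    have h1 : (P A).toReal ≤ 1 := by
      have := prob_le_one (μ := P) (s := A)
      simpa using ENNReal.toReal_mono ENNReal.one_ne_top this
    have h2 : (ν B).toReal ≤ 1 := by
      have := prob_le_one (μ := ν) (s := B)
      simpa using ENNReal.toReal_mono ENNReal.one_ne_top this
    linarith
end

section
/- Let P be a Borel probability measure on ℝ with cumulative distribution function F, let ν be a Borel probability measure on ℝ with continuous cumulative distribution function F_ν, and let s̲, s̄ : ℝ → ℝ be continuous nondecreasing functions with s̲(y) ≤ s̄(y) for all y, with s̲(y) → −∞ as y → −∞ and s̄(y) → +∞ as y → +∞. Define the correspondence Γ(y) = [s̲(y), s̄(y)]. Then the structure (P, Γ, ν) is internally consistent if and only if F_ν(s̲(y)) ≤ F(y) ≤ F_ν(s̄(y)) for all y ∈ ℝ. -/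
/-!
Necessity: if `π` couples `P` and `ν` and is carried by the graph of `Γ`, then `Y ≤ y` forces
`U ≤ s̄(y)`, and `U < s̲(y)` forces `Y ≤ y`, since `s̲` and `s̄` are monotone; continuity of `F_ν`
turns `ν(U < s̲(y))` into `F_ν(s̲(y))`.

Sufficiency: take the comonotone coupling `(F⁻¹(V), F_ν⁻¹(V))` with `V` uniform on `(0, 1)` and
`⁻¹` the generalized inverse. By the Galois connection `F⁻¹(v) ≤ y ↔ v ≤ F(y)`, the inequality
`F ≤ F_ν ∘ s̄` gives `F_ν⁻¹(v) ≤ s̄(F⁻¹(v))`, and `F_ν ∘ s̲ ≤ F` gives `s̲(y) < F_ν⁻¹(v)` for every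
`y < F⁻¹(v)`, hence `s̲(F⁻¹(v)) ≤ F_ν⁻¹(v)` by continuity of `s̲`.
-/

open MeasureTheory Set Filter

open ProbabilityTheory
open scoped Topology

/-- A structure (P, Γ, ν) is internally consistent if there exists a probability law π
for the pair (Y, U) with marginals P and ν such that π({(y,u) : u ∈ Γ(y)}) = 1. -/
def InternallyConsistent {Y U : Type*} [MeasurableSpace Y] [MeasurableSpace U]
    (P : MeasureTheory.Measure Y) (Γ : Y → Set U) (ν : MeasureTheory.Measure U) : Prop :=
  ∃ π : MeasureTheory.Measure (Y × U), MeasureTheory.IsProbabilityMeasure π ∧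
    π.map Prod.fst = P ∧ π.map Prod.snd = ν ∧ π {p | p.2 ∈ Γ p.1} = 1

namespace StieltjesFunction

/-- Only the values on `(0, 1)` are meaningful: elsewhere the set may be empty or unbounded
below, and `sInf` returns a junk value. -/
noncomputable def quantile (F : StieltjesFunction ℝ) (v : ℝ) : ℝ := sInf {y | v ≤ F y}

variable (F : StieltjesFunction ℝ) {v : ℝ}

lemma bddBelow_setOf_le (hF0 : Tendsto F atBot (𝓝 0)) (hv : 0 < v) :
    BddBelow {y | v ≤ F y} := by
  obtain ⟨y₀, hy₀⟩ := (hF0.eventually (eventually_lt_nhds hv)).exists_forall_of_atBot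
  exact ⟨y₀, fun y hy => le_of_not_gt fun hlt => (hy₀ y hlt.le).not_ge hy⟩

lemma nonempty_setOf_le (hF1 : Tendsto F atTop (𝓝 1)) (hv : v < 1) :
    {y | v ≤ F y}.Nonempty :=
  (hF1.eventually (eventually_ge_nhds hv)).exists

lemma le_apply_quantile (hF0 : Tendsto F atBot (𝓝 0)) (hF1 : Tendsto F atTop (𝓝 1))
    (hv : v ∈ Ioo 0 1) : v ≤ F (F.quantile v) := by
  have hright : ∀ y > F.quantile v, v ≤ F y := fun y hy => by
    obtain ⟨z, hz, hzy⟩ :=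
      (csInf_lt_iff (F.bddBelow_setOf_le hF0 hv.1) (F.nonempty_setOf_le hF1 hv.2)).mp hy
    exact hz.trans (F.mono hzy.le)
  exact ge_of_tendsto
    ((F.right_continuous _).tendsto.mono_left (nhdsWithin_mono _ Ioi_subset_Ici_self))
    (eventually_nhdsWithin_of_forall hright)

lemma quantile_le_iff (hF0 : Tendsto F atBot (𝓝 0)) (hF1 : Tendsto F atTop (𝓝 1))
    (hv : v ∈ Ioo 0 1) {y : ℝ} : F.quantile v ≤ y ↔ v ≤ F y :=
  ⟨fun h => (F.le_apply_quantile hF0 hF1 hv).trans (F.mono h),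
    fun h => csInf_le (F.bddBelow_setOf_le hF0 hv.1) h⟩

lemma lt_quantile_iff (hF0 : Tendsto F atBot (𝓝 0)) (hF1 : Tendsto F atTop (𝓝 1))
    (hv : v ∈ Ioo 0 1) {y : ℝ} : y < F.quantile v ↔ F y < v := by
  simpa only [not_le] using (F.quantile_le_iff hF0 hF1 hv).not

lemma monotoneOn_quantile (hF0 : Tendsto F atBot (𝓝 0)) (hF1 : Tendsto F atTop (𝓝 1)) :
    MonotoneOn F.quantile (Ioo 0 1) := fun _ ha _ hb hab =>
  (F.quantile_le_iff hF0 hF1 ha).mpr (hab.trans (F.le_apply_quantile hF0 hF1 hb))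

variable {F} {G : StieltjesFunction ℝ}

lemma quantile_le_comp_quantile (hF0 : Tendsto F atBot (𝓝 0)) (hF1 : Tendsto F atTop (𝓝 1))
    (hG0 : Tendsto G atBot (𝓝 0)) (hG1 : Tendsto G atTop (𝓝 1)) {g : ℝ → ℝ}
    (hFG : ∀ y, F y ≤ G (g y)) (hv : v ∈ Ioo 0 1) :
    G.quantile v ≤ g (F.quantile v) :=
  (G.quantile_le_iff hG0 hG1 hv).mpr ((F.le_apply_quantile hF0 hF1 hv).trans (hFG _))

lemma comp_quantile_le_quantile (hF0 : Tendsto F atBot (𝓝 0)) (hF1 : Tendsto F atTop (𝓝 1))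
    (hG0 : Tendsto G atBot (𝓝 0)) (hG1 : Tendsto G atTop (𝓝 1)) {f : ℝ → ℝ}
    (hf : Continuous f) (hGF : ∀ y, G (f y) ≤ F y) (hv : v ∈ Ioo 0 1) :
    f (F.quantile v) ≤ G.quantile v := by
  have hleft : ∀ y < F.quantile v, f y ≤ G.quantile v := fun y hy =>
    ((G.lt_quantile_iff hG0 hG1 hv).mpr
      ((hGF y).trans_lt ((F.lt_quantile_iff hF0 hF1 hv).mp hy))).le
  exact le_of_tendsto (hf.continuousAt.tendsto.mono_left nhdsWithin_le_nhds)
    (eventually_nhdsWithin_of_forall (s := Iio _) hleft)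

end StieltjesFunction

instance : IsProbabilityMeasure (volume.restrict (Ioo (0 : ℝ) 1)) := ⟨by simp⟩

lemma volume_Iic_inter_Ioo_zero_one {a : ℝ} (ha : a ∈ Icc 0 1) :
    volume (Iic a ∩ Ioo 0 1) = ENNReal.ofReal a := by
  refine le_antisymm ?_ ?_
  · calc volume (Iic a ∩ Ioo 0 1) ≤ volume (Ioc 0 a) :=
          measure_mono fun v hv => ⟨hv.2.1, hv.1⟩
      _ = ENNReal.ofReal a := by simp
  · calc ENNReal.ofReal a = volume (Ioo 0 a) := by simp
      _ ≤ volume (Iic a ∩ Ioo 0 1) :=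
          measure_mono fun v hv => ⟨hv.2.le, hv.1, hv.2.trans_le ha.2⟩

lemma aemeasurable_quantile_cdf (μ : Measure ℝ) :
    AEMeasurable (cdf μ).quantile (volume.restrict (Ioo (0 : ℝ) 1)) :=
  aemeasurable_restrict_of_monotoneOn measurableSet_Ioo
    ((cdf μ).monotoneOn_quantile (tendsto_cdf_atBot μ) (tendsto_cdf_atTop μ))

section Cdf

variable (μ : Measure ℝ) [IsProbabilityMeasure μ]

lemma map_quantile_cdf : (volume.restrict (Ioo (0 : ℝ) 1)).map (cdf μ).quantile = μ := by
  have hQ := aemeasurable_quantile_cdf μ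
  have : IsProbabilityMeasure ((volume.restrict (Ioo (0 : ℝ) 1)).map (cdf μ).quantile) :=
    Measure.isProbabilityMeasure_map hQ
  refine Measure.ext_of_Iic _ _ fun y => ?_
  have hpre : (cdf μ).quantile ⁻¹' Iic y ∩ Ioo 0 1 = Iic (cdf μ y) ∩ Ioo 0 1 := by
    ext v
    simp only [mem_inter_iff, mem_preimage, mem_Iic]
    exact and_congr_left fun hv =>
      (cdf μ).quantile_le_iff (tendsto_cdf_atBot μ) (tendsto_cdf_atTop μ) hv
  rw [Measure.map_apply_of_aemeasurable hQ measurableSet_Iic,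
    Measure.restrict_apply' measurableSet_Ioo, hpre,
    volume_Iic_inter_Ioo_zero_one ⟨cdf_nonneg μ y, cdf_le_one μ y⟩, ofReal_cdf]

lemma nullSingletonClass_of_continuous_cdf (h : Continuous (cdf μ)) : NullSingletonClass μ :=
  ⟨fun x => by rw [← measure_cdf μ, StieltjesFunction.measure_singleton,
    h.continuousWithinAt.leftLim_eq, sub_self, ENNReal.ofReal_zero]⟩

end Cdf

section InternallyConsistent

variable {Y U : Type*} [MeasurableSpace Y] [MeasurableSpace U] {P : Measure Y} {ν : Measure U}
  {Γ : Y → Set U}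

lemma InternallyConsistent.exists_ae_mem (h : InternallyConsistent P Γ ν)
    (hΓ : MeasurableSet {p : Y × U | p.2 ∈ Γ p.1}) :
    ∃ π : Measure (Y × U), π.map Prod.fst = P ∧ π.map Prod.snd = ν ∧ ∀ᵐ p ∂π, p.2 ∈ Γ p.1 := by
  obtain ⟨π, _, hfst, hsnd, hgraph⟩ := h
  exact ⟨π, hfst, hsnd, (prob_compl_eq_zero_iff hΓ).mpr hgraph⟩

lemma InternallyConsistent.measure_le_of_image_subset (h : InternallyConsistent P Γ ν)
    (hΓ : MeasurableSet {p : Y × U | p.2 ∈ Γ p.1}) {A : Set Y} {B : Set U}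
    (hA : MeasurableSet A) (hB : MeasurableSet B) (hAB : ∀ y ∈ A, Γ y ⊆ B) : P A ≤ ν B := by
  obtain ⟨π, rfl, rfl, hπ⟩ := h.exists_ae_mem hΓ
  rw [Measure.map_apply measurable_fst hA, Measure.map_apply measurable_snd hB]
  exact measure_mono_ae (hπ.mono fun p hp hpA => hAB p.1 hpA hp)

lemma InternallyConsistent.measure_le_of_preimage_subset (h : InternallyConsistent P Γ ν)
    (hΓ : MeasurableSet {p : Y × U | p.2 ∈ Γ p.1}) {A : Set Y} {B : Set U}
    (hA : MeasurableSet A) (hB : MeasurableSet B) (hBA : ∀ y, ∀ u ∈ Γ y, u ∈ B → y ∈ A) :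
    ν B ≤ P A := by
  obtain ⟨π, rfl, rfl, hπ⟩ := h.exists_ae_mem hΓ
  rw [Measure.map_apply measurable_fst hA, Measure.map_apply measurable_snd hB]
  exact measure_mono_ae (hπ.mono fun p hp hpB => hBA p.1 p.2 hp hpB)

end InternallyConsistent

lemma internallyConsistent_of_forall_quantile_mem (μ ν : Measure ℝ) [IsProbabilityMeasure μ]
    [IsProbabilityMeasure ν] {Γ : ℝ → Set ℝ} (hΓ : MeasurableSet {p : ℝ × ℝ | p.2 ∈ Γ p.1})
    (h : ∀ v ∈ Ioo (0 : ℝ) 1, (cdf ν).quantile v ∈ Γ ((cdf μ).quantile v)) :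
    InternallyConsistent μ Γ ν := by
  have hpair := (aemeasurable_quantile_cdf μ).prodMk (aemeasurable_quantile_cdf ν)
  have hsub : Ioo (0 : ℝ) 1 ⊆ (fun v => ((cdf μ).quantile v, (cdf ν).quantile v)) ⁻¹'
      {p | p.2 ∈ Γ p.1} := h
  refine ⟨_, Measure.isProbabilityMeasure_map hpair, ?_, ?_, ?_⟩
  · rw [AEMeasurable.map_map_of_aemeasurable measurable_fst.aemeasurable hpair]
    exact map_quantile_cdf μ
  · rw [AEMeasurable.map_map_of_aemeasurable measurable_snd.aemeasurable hpair]
    exact map_quantile_cdf ν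
  · rw [Measure.map_apply_of_aemeasurable hpair hΓ, Measure.restrict_apply' measurableSet_Ioo,
      inter_eq_right.mpr hsub, Real.volume_Ioo, sub_zero, ENNReal.ofReal_one]

lemma measurableSet_setOf_mem_Icc {α : Type*} [MeasurableSpace α] {f g : α → ℝ}
    (hf : Measurable f) (hg : Measurable g) :
    MeasurableSet {p : α × ℝ | p.2 ∈ Icc (f p.1) (g p.1)} :=
  (measurableSet_le (hf.comp measurable_fst) measurable_snd).inter
    (measurableSet_le measurable_snd (hg.comp measurable_fst))

theorem stmt_10_general (P ν : Measure ℝ) [IsProbabilityMeasure P] [IsProbabilityMeasure ν]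
    (hFν_cont : Continuous fun u : ℝ => (ν (Set.Iic u)).toReal)
    (slo shi : ℝ → ℝ) (hlo_cont : Continuous slo)
    (hlo_mono : Monotone slo) (hhi_mono : Monotone shi) :
    InternallyConsistent P (fun y => Set.Icc (slo y) (shi y)) ν ↔
      ∀ y : ℝ, (ν (Set.Iic (slo y))).toReal ≤ (P (Set.Iic y)).toReal ∧
        (P (Set.Iic y)).toReal ≤ (ν (Set.Iic (shi y))).toReal := by
  have hcdf : ∀ (μ : Measure ℝ) [IsProbabilityMeasure μ] (x : ℝ),
      (μ (Iic x)).toReal = cdf μ x :=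
    fun μ _ x => by rw [cdf_eq_real, measureReal_def]
  have hΓ := measurableSet_setOf_mem_Icc hlo_mono.measurable hhi_mono.measurable
  constructor
  · intro h y
    have : NullSingletonClass ν := nullSingletonClass_of_continuous_cdf ν
      (by simpa only [hcdf] using hFν_cont)
    have hlo : ν (Iio (slo y)) ≤ P (Iic y) := h.measure_le_of_preimage_subset hΓ
      measurableSet_Iic measurableSet_Iio fun y' u hu hlt =>
        le_of_not_gt fun hy => (hu.1.trans_lt hlt).not_ge (hlo_mono hy.le)
    have hhi : P (Iic y) ≤ ν (Iic (shi y)) := h.measure_le_of_image_subset hΓ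
      measurableSet_Iic measurableSet_Iic fun y' hy' u hu => hu.2.trans (hhi_mono hy')
    rw [← measure_congr Iio_ae_eq_Iic]
    exact ⟨ENNReal.toReal_mono (measure_ne_top _ _) hlo,
      ENNReal.toReal_mono (measure_ne_top _ _) hhi⟩
  · intro h
    simp only [hcdf] at h
    refine internallyConsistent_of_forall_quantile_mem P ν hΓ fun v hv => ⟨?_, ?_⟩
    · exact StieltjesFunction.comp_quantile_le_quantile (tendsto_cdf_atBot P)
        (tendsto_cdf_atTop P) (tendsto_cdf_atBot ν) (tendsto_cdf_atTop ν) hlo_cont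
        (fun y => (h y).1) hv
    · exact StieltjesFunction.quantile_le_comp_quantile (tendsto_cdf_atBot P)
        (tendsto_cdf_atTop P) (tendsto_cdf_atBot ν) (tendsto_cdf_atTop ν)
        (fun y => (h y).2) hv

/-- Pilot Example 2, skills versus job requirements: with P a Borel
probability measure on ℝ with cdf F, ν a Borel probability measure on ℝ with continuous
cdf F_ν, s̲ ≤ s̄ continuous nondecreasing with s̲(y) → −∞ at −∞ and s̄(y) → +∞ at +∞, and
Γ(y) = [s̲(y), s̄(y)], the structure (P, Γ, ν) is internally consistent if and only if
F_ν(s̲(y)) ≤ F(y) ≤ F_ν(s̄(y)) for all y. -/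
theorem stmt_10 (P ν : Measure ℝ) [IsProbabilityMeasure P] [IsProbabilityMeasure ν]
    (hFν_cont : Continuous fun u : ℝ => (ν (Set.Iic u)).toReal)
    (slo shi : ℝ → ℝ) (hlo_cont : Continuous slo) (hhi_cont : Continuous shi)
    (hlo_mono : Monotone slo) (hhi_mono : Monotone shi)
    (hle : ∀ y, slo y ≤ shi y)
    (hlo_bot : Tendsto slo atBot atBot)
    (hhi_top : Tendsto shi atTop atTop) :
    InternallyConsistent P (fun y => Set.Icc (slo y) (shi y)) ν ↔
      ∀ y : ℝ, (ν (Set.Iic (slo y))).toReal ≤ (P (Set.Iic y)).toReal ∧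
        (P (Set.Iic y)).toReal ≤ (ν (Set.Iic (shi y))).toReal :=
  stmt_10_general P ν hFν_cont slo shi hlo_cont hlo_mono hhi_mono
end

section
/- Let 𝔛 be a finite set, P a probability measure on 𝔛, and m : 2^𝔛 → [0,1] a set function with P(A) ≤ m(A) for every A ⊆ 𝔛. Let Y_1, Y_2, … be i.i.d. with law P and let P_n be the empirical measure. Let (h_n) be a sequence of positive reals with h_n → 0 and h_n √(n / ln ln n) → ∞ as n → ∞. Then almost surely, for all sufficiently large n, {A ⊆ 𝔛 : P_n(A) ≥ m(A) − h_n} = {A ⊆ 𝔛 : P(A) = m(A)}. -/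
/-!
Fix `A ⊆ 𝔛`; the indicators `1_A(Y i)` are i.i.d. with mean `p = P(A) ≤ m(A)`. If `p < m(A)`,
the strong law and `h n → 0` give `P_n(A) < m(A) - h n` eventually. If `p = m(A)`, we need the
lower deviation `n p - n P_n(A)` to be eventually at most `n h n`. The centred indicators are
sub-Gaussian (Hoeffding's lemma), so Doob's maximal inequality for the submartingale
`exp (l S_n)` bounds the probability that the partial sums exceed `√(8 c 2^k ln ln 2^k)` on the
dyadic block `n ≤ 2^(k+1)` by `(k ln 2)⁻²`; Borel–Cantelli then gives
`n p - n P_n(A) ≤ √(2 n ln ln n)` eventually, which is `o(n h n)` by the rate assumption.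
As `𝔛` is finite, the events for all `A` hold simultaneously.
-/

open MeasureTheory ProbabilityTheory Filter Finset Real
open scoped NNReal ENNReal Topology

namespace ProbabilityTheory

variable {Ω : Type*} [MeasurableSpace Ω] {μ : Measure Ω}

lemma HasSubgaussianMGF.integral_eq_zero [IsProbabilityMeasure μ] {X : Ω → ℝ} {c : ℝ≥0}
    (h : HasSubgaussianMGF X c μ) : μ[X] = 0 := by
  have h0 : (0 : ℝ) ∈ interior (integrableExpSet X μ) := by simp [h.integrableExpSet_eq_univ]
  have hmax : IsLocalMax (fun t => mgf X μ t - exp (c * t ^ 2 / 2)) 0 :=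
    Eventually.of_forall fun t => by simpa using h.mgf_le t
  have hexp : HasDerivAt (fun t : ℝ => exp (c * t ^ 2 / 2)) 0 0 := by
    simpa using ((hasDerivAt_pow 2 (0 : ℝ)).const_mul (c : ℝ) |>.div_const 2).exp
  rw [← deriv_mgf_zero h0, ← sub_zero (deriv _ _)]
  exact hmax.hasDerivAt_eq_zero ((hasDerivAt_mgf h0).differentiableAt.hasDerivAt.sub hexp)

lemma HasSubgaussianMGF.one_le_mgf [IsProbabilityMeasure μ] {X : Ω → ℝ} {c : ℝ≥0}
    (h : HasSubgaussianMGF X c μ) (t : ℝ) : 1 ≤ mgf X μ t := by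
  have hlin := h.integrable.const_mul t
  calc (1 : ℝ) = ∫ ω, (1 + t * X ω) ∂μ := by
        rw [integral_add (integrable_const 1) hlin, integral_const_mul, h.integral_eq_zero]
        simp
    _ ≤ mgf X μ t :=
      integral_mono ((integrable_const 1).add hlin) (h.integrable_exp_mul t) fun ω => by
        simpa [add_comm] using add_one_le_exp (t * X ω)

lemma iIndepFun.integrable_prod_range {V : ℕ → Ω → ℝ} (hV : ∀ i, Measurable (V i))
    (hindep : iIndepFun V μ) (hint : ∀ i, Integrable (V i) μ) (n : ℕ) :
    Integrable (fun ω => ∏ i ∈ range n, V i ω) μ := by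
  induction n with
  | zero =>
    have : IsProbabilityMeasure μ := hindep.isProbabilityMeasure
    simp
  | succ n ih =>
    simp_rw [prod_range_succ, ← Finset.prod_apply]
    exact (hindep.indepFun_prod_range_succ hV n).integrable_mul
      (by simpa only [← Finset.prod_apply] using ih) (hint n)

lemma submartingale_prod_range {V : ℕ → Ω → ℝ} (hV : ∀ i, StronglyMeasurable (V i))
    (hindep : iIndepFun V μ) (hnonneg : ∀ i ω, 0 ≤ V i ω) (hint : ∀ i, Integrable (V i) μ)
    (hmean : ∀ i, 1 ≤ μ[V i]) :
    Submartingale (fun n ω => ∏ i ∈ range (n + 1), V i ω) (Filtration.natural V hV) μ := by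
  have : IsProbabilityMeasure μ := hindep.isProbabilityMeasure
  set ℱ := Filtration.natural V hV
  have hadapted : ∀ n, StronglyMeasurable[ℱ n] (∏ i ∈ range (n + 1), V i) := fun n =>
    Finset.stronglyMeasurable_prod _ fun i hi => (Filtration.stronglyAdapted_natural hV i).mono
      (ℱ.mono (by simpa [Nat.lt_succ_iff] using hi))
  have hprod := hindep.integrable_prod_range (fun i => (hV i).measurable) hint
  refine submartingale_nat (fun n => by simpa [← Finset.prod_apply] using hadapted n)
    (fun n => hprod (n + 1)) fun n => ?_
  have hsplit : (fun ω => ∏ i ∈ range (n + 1 + 1), V i ω) =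
      (∏ i ∈ range (n + 1), V i) * V (n + 1) := by
    ext ω; simp [prod_range_succ _ (n + 1)]
  have hpull := condExp_mul_of_stronglyMeasurable_left (m := ℱ n) (μ := μ) (hadapted n)
    (hsplit ▸ hprod (n + 2)) (hint (n + 1))
  filter_upwards [hpull, hindep.condExp_natural_ae_eq_of_lt hV (Nat.lt_succ_self n)] with ω h1 h2
  rw [hsplit, h1, Pi.mul_apply, h2, Finset.prod_apply]
  exact le_mul_of_one_le_right (prod_nonneg fun i _ => hnonneg i ω) (hmean (n + 1))

theorem measure_exists_sum_range_ge_le {Z : ℕ → Ω → ℝ} (hZ : ∀ i, Measurable (Z i))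
    (hindep : iIndepFun Z μ) {c : ℝ≥0} (hsub : ∀ i, HasSubgaussianMGF (Z i) c μ) {t : ℝ}
    (ht : 0 < t) (N : ℕ) :
    μ {ω | ∃ n ≤ N, t ≤ ∑ i ∈ range n, Z i ω} ≤ ENNReal.ofReal (exp (-t ^ 2 / (2 * N * c))) := by
  have : IsProbabilityMeasure μ := hindep.isProbabilityMeasure
  obtain _ | N := N
  · simp [ht.not_ge]
  -- the Chernoff parameter minimising `N c l ^ 2 / 2 - l t`
  set l := t / ((N + 1 : ℕ) * c)
  have hl : 0 ≤ l := by positivity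
  set V : ℕ → Ω → ℝ := fun i ω => exp (l * Z i ω)
  have hVmeas : ∀ i, Measurable (V i) := fun i => ((hZ i).const_mul l).exp
  have hmart := submartingale_prod_range (fun i => (hVmeas i).stronglyMeasurable)
    (hindep.comp (fun _ x => exp (l * x)) fun _ => (measurable_const_mul l).exp)
    (fun i ω => (exp_pos _).le) (fun i => (hsub i).integrable_exp_mul l)
    (fun i => (hsub i).one_le_mgf l)
  have hprod : ∀ n ω, ∏ i ∈ range n, V i ω = exp (l * ∑ i ∈ range n, Z i ω) := fun n ω => by
    simp [V, mul_sum, exp_sum]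
  set E := {ω | exp (l * t) ≤
    (range (N + 1)).sup' nonempty_range_add_one fun j => ∏ i ∈ range (j + 1), V i ω}
  have hsubset : {ω | ∃ n ≤ N + 1, t ≤ ∑ i ∈ range n, Z i ω} ⊆ E := by
    rintro ω ⟨_ | j, hj, htj⟩
    · simp only [range_zero, sum_empty] at htj; linarith
    refine (exp_le_exp.2 (mul_le_mul_of_nonneg_left htj hl)).trans ?_
    rw [← hprod]
    exact le_sup' (fun j => ∏ i ∈ range (j + 1), V i ω) (mem_range.2 (by omega))
  have hmgf : ∫ ω, ∏ i ∈ range (N + 1), V i ω ∂μ ≤ exp ((N + 1 : ℕ) * c * l ^ 2 / 2) := by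
    simp_rw [hprod]
    simpa [mgf] using (HasSubgaussianMGF.sum_of_iIndepFun hindep (s := range (N + 1))
      fun i _ => hsub i).mgf_le l
  have hmax : ENNReal.ofReal (exp (l * t)) * μ E ≤
      ENNReal.ofReal (exp ((N + 1 : ℕ) * c * l ^ 2 / 2)) := by
    have := maximal_ineq hmart (fun n ω => prod_nonneg fun i _ => (exp_pos _).le)
      (ε := (exp (l * t)).toNNReal) N
    rw [Real.coe_toNNReal _ (exp_pos _).le] at this
    refine this.trans (ENNReal.ofReal_le_ofReal ((setIntegral_le_integral ?_ ?_).trans hmgf))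
    · exact hmart.integrable N
    · exact ae_of_all _ fun ω => prod_nonneg fun i _ => (exp_pos _).le
  have hexponent : (N + 1 : ℕ) * c * l ^ 2 / 2 - l * t = -t ^ 2 / (2 * (N + 1 : ℕ) * c) := by
    rcases eq_or_ne c 0 with rfl | hc
    · simp [l]
    · have : (c : ℝ) ≠ 0 := by exact_mod_cast hc
      simp only [l]; field_simp; ring
  calc μ {ω | ∃ n ≤ N + 1, t ≤ ∑ i ∈ range n, Z i ω} ≤ μ E := measure_mono hsubset
    _ ≤ ENNReal.ofReal (exp ((N + 1 : ℕ) * c * l ^ 2 / 2)) / ENNReal.ofReal (exp (l * t)) := by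
      rw [ENNReal.le_div_iff_mul_le (by simp [exp_pos]) (by simp), mul_comm]
      exact hmax
    _ = ENNReal.ofReal (exp (-t ^ 2 / (2 * (N + 1 : ℕ) * c))) := by
      rw [← ENNReal.ofReal_div_of_pos (exp_pos _), ← exp_sub, hexponent]

lemma exp_neg_two_mul_log {x : ℝ} (hx : 0 < x) : exp (-2 * log x) = (x ^ 2)⁻¹ := by
  rw [neg_mul, exp_neg, ← Nat.cast_ofNat, ← log_pow, exp_log (by positivity)]

lemma summable_exp_neg_two_mul_log_log_two_pow :
    Summable fun k : ℕ => exp (-2 * log (log (2 ^ k : ℝ))) := by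
  rw [← summable_nat_add_iff 1]
  have hterm : ∀ k : ℕ, exp (-2 * log (log (2 ^ (k + 1) : ℝ))) =
      (log 2 ^ 2)⁻¹ * (((k + 1 : ℕ) : ℝ) ^ 2)⁻¹ := fun k => by
    rw [log_pow, exp_neg_two_mul_log (by positivity), mul_pow, mul_inv, mul_comm]
  simp_rw [hterm]
  exact ((summable_nat_add_iff 1).2 (Real.summable_nat_pow_inv.2 one_lt_two)).mul_left _

lemma two_pow_mul_log_log_le {k n : ℕ} (hk : 2 ≤ k) (hn : 2 ^ k ≤ n) :
    (2 : ℝ) ^ k * log (log (2 ^ k)) ≤ n * log (log n) := by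
  have hn' : (2 : ℝ) ^ k ≤ n := by exact_mod_cast hn
  have hlog : 1 < log ((2 : ℝ) ^ k) := by
    rw [log_pow]
    have : (2 : ℝ) ≤ k := by exact_mod_cast hk
    nlinarith [log_two_gt_d9]
  have hloglog : log (log ((2 : ℝ) ^ k)) ≤ log (log n) :=
    log_le_log (by linarith) (log_le_log (by positivity) hn')
  have := log_pos hlog
  nlinarith

theorem ae_eventually_sum_range_le_sqrt_mul_log_log {Z : ℕ → Ω → ℝ} (hZ : ∀ i, Measurable (Z i))
    (hindep : iIndepFun Z μ) {c : ℝ≥0} (hc : 0 < c) (hsub : ∀ i, HasSubgaussianMGF (Z i) c μ) :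
    ∀ᵐ ω ∂μ, ∀ᶠ n : ℕ in atTop, ∑ i ∈ range n, Z i ω ≤ √(8 * c * n * log (log n)) := by
  have : IsProbabilityMeasure μ := hindep.isProbabilityMeasure
  set L : ℕ → ℝ := fun k => log (log (2 ^ k))
  -- thresholds chosen so that the maximal inequality gives `μ (E k) ≤ exp (-2 L k) = (k log 2)⁻²`
  set E : ℕ → Set Ω := fun k =>
    {ω | ∃ n ≤ 2 ^ (k + 1), √(8 * c * 2 ^ k * L k) ≤ ∑ i ∈ range n, Z i ω}
  have hE : ∀ k, μ (E k) ≤ ENNReal.ofReal (exp (-2 * L k)) := by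
    intro k
    rcases le_or_gt (L k) 0 with hL | hL
    · exact prob_le_one.trans (by simp; linarith)
    · refine (measure_exists_sum_range_ge_le hZ hindep hsub (by positivity) _).trans_eq ?_
      rw [sq_sqrt (by positivity)]
      congr 2
      push_cast
      field_simp
      ring
  have hsum : ∑' k, μ (E k) ≠ ∞ := by
    rw [← lt_top_iff_ne_top]
    calc ∑' k, μ (E k) ≤ ∑' k, ENNReal.ofReal (exp (-2 * L k)) := ENNReal.tsum_le_tsum hE
      _ = ENNReal.ofReal (∑' k, exp (-2 * L k)) := (ENNReal.ofReal_tsum_of_nonneg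
          (fun k => (exp_pos _).le) summable_exp_neg_two_mul_log_log_two_pow).symm
      _ < ∞ := ENNReal.ofReal_lt_top
  have hlog : Tendsto (Nat.log 2) atTop atTop :=
    tendsto_atTop_atTop.2 fun K => ⟨2 ^ K, fun n hn => Nat.le_log_of_pow_le one_lt_two hn⟩
  filter_upwards [ae_eventually_notMem hsum] with ω hω
  filter_upwards [hlog.eventually (hω.and (eventually_ge_atTop 2))] with n ⟨hnE, hk⟩
  have hn0 : n ≠ 0 := by rintro rfl; simp at hk
  simp only [E, Set.mem_ofPred_eq, not_exists, not_and, not_le] at hnE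
  refine (hnE n (Nat.lt_pow_succ_log_self one_lt_two n).le).le.trans (sqrt_le_sqrt ?_)
  have := two_pow_mul_log_log_le hk (Nat.pow_log_le_self 2 hn0)
  simp only [L, mul_assoc]
  gcongr

end ProbabilityTheory

section EmpiricalFrequency

variable {Ω X : Type*} [MeasurableSpace Ω] [MeasurableSpace X] {μ : Measure Ω} {P : Measure X}
  {Y : ℕ → Ω → X} {A : Set X}

lemma integral_indicator_one_comp {i : ℕ} (hY : Measurable (Y i)) (hlaw : μ.map (Y i) = P)
    (hA : MeasurableSet A) : ∫ ω, A.indicator (fun _ => (1 : ℝ)) (Y i ω) ∂μ = (P A).toReal := by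
  rw [← integral_map hY.aemeasurable (measurable_const.indicator hA).aestronglyMeasurable, hlaw,
    integral_indicator_const _ hA, smul_eq_mul, mul_one, measureReal_def]

lemma ae_tendsto_avg_indicator_one (hY : ∀ i, Measurable (Y i)) (hindep : iIndepFun Y μ)
    (hlaw : ∀ i, μ.map (Y i) = P) (hA : MeasurableSet A) :
    ∀ᵐ ω ∂μ, Tendsto (fun n : ℕ => (∑ i ∈ range n, A.indicator (fun _ => (1 : ℝ)) (Y i ω)) / n)
      atTop (𝓝 (P A).toReal) := by
  have hind : Measurable (A.indicator fun _ => (1 : ℝ)) := measurable_const.indicator hA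
  have hint : Integrable (fun ω => A.indicator (fun _ => (1 : ℝ)) (Y 0 ω)) μ := by
    have : IsProbabilityMeasure μ := hindep.isProbabilityMeasure
    refine (integrable_const (1 : ℝ)).mono (hind.comp (hY 0)).aestronglyMeasurable
      (ae_of_all _ fun ω => ?_)
    by_cases h : Y 0 ω ∈ A <;> simp [h]
  rw [← integral_indicator_one_comp (hY 0) (hlaw 0) hA]
  exact strong_law_ae_real _ hint (fun i j hij => (hindep.indepFun hij).comp hind hind)
    fun i => (IdentDistrib.mk (hY i).aemeasurable (hY 0).aemeasurable
      (by rw [hlaw, hlaw])).comp hind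

lemma ae_eventually_mul_sub_sum_indicator_one_le (hY : ∀ i, Measurable (Y i))
    (hindep : iIndepFun Y μ) (hlaw : ∀ i, μ.map (Y i) = P) (hA : MeasurableSet A) :
    ∀ᵐ ω ∂μ, ∀ᶠ n : ℕ in atTop,
      n * (P A).toReal - ∑ i ∈ range n, A.indicator (fun _ => (1 : ℝ)) (Y i ω) ≤
        √(2 * n * log (log n)) := by
  have : IsProbabilityMeasure μ := hindep.isProbabilityMeasure
  have hind : Measurable (A.indicator fun _ => (1 : ℝ)) := measurable_const.indicator hA
  set W : ℕ → Ω → ℝ := fun i ω => A.indicator (fun _ => (1 : ℝ)) (Y i ω)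
  have hsub : ∀ i, HasSubgaussianMGF (fun ω => (P A).toReal - W i ω) (1 / 4) μ := fun i => by
    have hW := hasSubgaussianMGF_of_mem_Icc (μ := μ) (a := 0) (b := 1)
      (hind.comp (hY i)).aemeasurable (ae_of_all _ fun ω => by by_cases h : Y i ω ∈ A <;> simp [h])
    convert hW.neg using 1
    · ext ω; simp [W, integral_indicator_one_comp (hY i) (hlaw i) hA]
    · norm_num
  filter_upwards [ae_eventually_sum_range_le_sqrt_mul_log_log
    (fun i => measurable_const.sub (hind.comp (hY i)))
    (hindep.comp (fun _ x => (P A).toReal - A.indicator (fun _ => (1 : ℝ)) x)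
      fun _ => measurable_const.sub hind) (by norm_num) hsub] with ω hω
  filter_upwards [hω] with n hn
  convert hn using 2
  · simp [sum_sub_distrib]
  · norm_num

end EmpiricalFrequency

lemma eventually_mul_sqrt_mul_log_log_le {h : ℕ → ℝ}
    (hrate : Tendsto (fun n : ℕ => h n * √(n / log (log n))) atTop atTop) (C : ℝ) :
    ∀ᶠ n : ℕ in atTop, C * √(n * log (log n)) ≤ n * h n := by
  filter_upwards [hrate.eventually_ge_atTop C, eventually_ge_atTop 3] with n hC hn
  have hn' : (3 : ℝ) ≤ n := by exact_mod_cast hn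
  have hlog : 1 < log n := by
    rw [lt_log_iff_exp_lt (by positivity)]
    linarith [exp_one_lt_d9]
  have hsqrt : √(n / log (log n)) * √(n * log (log n)) = n := by
    have hL := (log_pos hlog).ne'
    rw [← sqrt_mul (div_nonneg (Nat.cast_nonneg n) (log_pos hlog).le),
      show n / log (log n) * (n * log (log n)) = (n : ℝ) * n by field_simp,
      sqrt_mul_self (Nat.cast_nonneg n)]
  calc C * √(n * log (log n)) ≤ h n * √(n / log (log n)) * √(n * log (log n)) := by gcongr
    _ = n * h n := by rw [mul_assoc, hsqrt, mul_comm]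

theorem stmt_12_general {X : Type*} [Fintype X] [MeasurableSpace X] [MeasurableSingletonClass X]
    {Ω : Type*} [MeasurableSpace Ω] (μ : Measure Ω)
    (P : Measure X)
    (m : Set X → ℝ)
    (hnull : ∀ A : Set X, (P A).toReal ≤ m A)
    (Y : ℕ → Ω → X) (hYmeas : ∀ i, Measurable (Y i))
    (hYindep : ProbabilityTheory.iIndepFun Y μ)
    (hYident : ∀ i, μ.map (Y i) = P)
    (h : ℕ → ℝ)
    (hto0 : Tendsto h atTop (nhds 0))
    (hrate : Tendsto (fun n : ℕ => h n * Real.sqrt ((n : ℝ) / Real.log (Real.log n)))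
      atTop atTop) :
    ∀ᵐ ω ∂μ, ∀ᶠ n : ℕ in atTop,
      {A : Set X |
          (∑ i ∈ Finset.range n, A.indicator (fun _ => (1:ℝ)) (Y i ω)) / n ≥ m A - h n} =
      {A : Set X | (P A).toReal = m A} := by
  have hset : ∀ A : Set X, ∀ᵐ ω ∂μ, ∀ᶠ n : ℕ in atTop,
      ((∑ i ∈ range n, A.indicator (fun _ => (1 : ℝ)) (Y i ω)) / n ≥ m A - h n ↔
        (P A).toReal = m A) := by
    intro A
    have hA : MeasurableSet A := A.toFinite.measurableSet
    rcases (hnull A).eq_or_lt with hbinding | hslack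
    · filter_upwards [ae_eventually_mul_sub_sum_indicator_one_le hYmeas hYindep hYident hA]
        with ω hω
      filter_upwards [hω, eventually_mul_sqrt_mul_log_log_le hrate √2, eventually_gt_atTop 0]
        with n hdev hdominate hn
      refine iff_of_true ?_ hbinding
      rw [mul_assoc, sqrt_mul zero_le_two] at hdev
      rw [ge_iff_le, ← hbinding, le_div_iff₀ (by positivity)]
      linarith
    · filter_upwards [ae_tendsto_avg_indicator_one hYmeas hYindep hYident hA] with ω hω
      filter_upwards [(hω.add hto0).eventually_lt_const (by simpa using hslack)] with n hn
      exact iff_of_false (by simp only [ge_iff_le, not_le]; linarith) hslack.ne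
  filter_upwards [ae_all_iff.2 hset] with ω hω
  filter_upwards [eventually_all.2 hω] with n hn
  ext A
  exact hn A

/-- discrete case step in the proof of Theorem 1: for 𝔛 finite, P a
probability measure on 𝔛, m : 2^𝔛 → [0,1] with P(A) ≤ m(A) for all A, Y_1, Y_2, …
i.i.d. with law P, P_n the empirical measure, and h_n > 0 with h_n → 0 and
h_n √(n / ln ln n) → ∞, almost surely for all sufficiently large n the estimated class
{A : P_n(A) ≥ m(A) − h_n} coincides with the binding class {A : P(A) = m(A)}. -/
theorem stmt_12 {X : Type*} [Fintype X] [MeasurableSpace X] [MeasurableSingletonClass X]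
    {Ω : Type*} [MeasurableSpace Ω] (μ : Measure Ω) [IsProbabilityMeasure μ]
    (P : Measure X) [IsProbabilityMeasure P]
    (m : Set X → ℝ) (hm : ∀ A : Set X, m A ∈ Set.Icc (0:ℝ) 1)
    (hnull : ∀ A : Set X, (P A).toReal ≤ m A)
    (Y : ℕ → Ω → X) (hYmeas : ∀ i, Measurable (Y i))
    (hYindep : ProbabilityTheory.iIndepFun Y μ)
    (hYident : ∀ i, μ.map (Y i) = P)
    (h : ℕ → ℝ) (hpos : ∀ n, 0 < h n)
    (hto0 : Tendsto h atTop (nhds 0))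
    (hrate : Tendsto (fun n : ℕ => h n * Real.sqrt ((n : ℝ) / Real.log (Real.log n)))
      atTop atTop) :
    ∀ᵐ ω ∂μ, ∀ᶠ n : ℕ in atTop,
      {A : Set X |
          (∑ i ∈ Finset.range n, A.indicator (fun _ => (1:ℝ)) (Y i ω)) / n ≥ m A - h n} =
      {A : Set X | (P A).toReal = m A} :=
  stmt_12_general μ P m hnull Y hYmeas hYindep hYident h hto0 hrate
end

section
/- Let Y have law P on ℝ^{d_y}, where Y either takes values in a finite set or P has a density with respect to Lebesgue measure, and let (P, Γ, ν) be a structure satisfying the alternative hypothesis H_a: sup_{A∈C} [P(A) − ν(Γ(A))] ≠ 0, i.e. there exists A ∈ C with P(A) > ν(Γ(A)). Let Y_1, Y_2, … be i.i.d. with law P, P_n the empirical measure, G_n(A) = √n(P_n(A) − P(A)), T_n = √n · sup_{A∈C} [P_n(A) − ν(Γ(A))], C_{h_n} = {A ∈ C : P_n(A) ≥ ν(Γ(A)) − h_n}, T̃_n = sup_{A∈C_{h_n}} G_n(A), and c_n^α = inf{c : Pr(T̃_n ≤ c) ≥ 1 − α} for α ∈ (0,1). Suppose Assumptions 1 and 2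 hold (as in Theorem 1: the Hausdorff separation condition on C_b and C_{b,h}, and h_n ln ln n + h_n^{−1}√(ln ln n / n) → 0). Then lim_{n→∞} Pr(T_n ≥ c_n^α) = 1. -/
/-!
Under the alternative some `A₀ ∈ 𝓒` has `δ := P A₀ - m A₀ > 0`. The class `𝓒` has finite
brackets: the distribution function of each coordinate is bracketed by finitely many of its own
level sets, and boxes, products with subsets of the finite factor and complements inherit
brackets. Hence `P_n → P` uniformly over `𝓒` in probability, and the event
`sup_𝓒 |P_n - P| ≤ δ / 4` has probability tending to one. On it the localized statistic is at
most `√n δ / 4`, so its `(1 - α)`-quantile `c_n` is too as soon as the event has probability at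
least `1 - α`, while `T_n ≥ √n (P_n A₀ - m A₀) ≥ √n · 3δ / 4`.
-/

open MeasureTheory Set Filter

open scoped ENNReal Topology

section InnerRegular

variable {α : Type*} [TopologicalSpace α] [LinearOrder α] [MeasurableSpace α]
  {μ : Measure α} [μ.InnerRegular] {s : Set α} {c : ℝ≥0∞}

theorem measure_le_of_forall_measure_Iic_le [ClosedIciTopology α] (hs : MeasurableSet s)
    (h : ∀ x ∈ s, μ (Iic x) ≤ c) : μ s ≤ c := by
  by_contra! hlt
  obtain ⟨K, hKs, hK, hcK⟩ := hs.exists_lt_isCompact hlt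
  obtain ⟨x, hxK, hxK'⟩ :=
    hK.exists_isGreatest (nonempty_of_measure_ne_zero (zero_le.trans_lt hcK).ne')
  exact (hcK.trans_le ((measure_mono fun y hy => hxK' hy).trans (h x (hKs hxK)))).false

theorem measure_le_of_forall_measure_Ici_le [ClosedIicTopology α] (hs : MeasurableSet s)
    (h : ∀ x ∈ s, μ (Ici x) ≤ c) : μ s ≤ c := by
  by_contra! hlt
  obtain ⟨K, hKs, hK, hcK⟩ := hs.exists_lt_isCompact hlt
  obtain ⟨x, hxK, hxK'⟩ :=
    hK.exists_isLeast (nonempty_of_measure_ne_zero (zero_le.trans_lt hcK).ne')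
  exact (hcK.trans_le ((measure_mono fun y hy => hxK' hy).trans (h x (hKs hxK)))).false

end InnerRegular

section CDF

variable (Q : Measure ℝ) [IsFiniteMeasure Q]

theorem monotone_measureReal_Iic : Monotone fun s => Q.real (Iic s) :=
  fun _ _ h => measureReal_mono (Iic_subset_Iic.2 h)

theorem monotone_measureReal_Iio : Monotone fun s => Q.real (Iio s) :=
  fun _ _ h => measureReal_mono (Iio_subset_Iio h)

theorem measureReal_setOf_measureReal_Iic_lt_le {p : ℝ} (hp : 0 ≤ p) :
    Q.real {s | Q.real (Iic s) < p} ≤ p := by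
  have hmeas : MeasurableSet {s | Q.real (Iic s) < p} :=
    measurableSet_lt (monotone_measureReal_Iic Q).measurable measurable_const
  refine ENNReal.toReal_le_of_le_ofReal hp (measure_le_of_forall_measure_Iic_le hmeas ?_)
  intro x hx
  rw [← ofReal_measureReal]
  exact ENNReal.ofReal_le_ofReal hx.le

theorem le_measureReal_setOf_measureReal_Iio_le {p : ℝ} (hp : p ≤ Q.real univ) :
    p ≤ Q.real {s | Q.real (Iio s) ≤ p} := by
  have hmeas : MeasurableSet {s | Q.real (Iio s) ≤ p} :=
    measurableSet_le (monotone_measureReal_Iio Q).measurable measurable_const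
  have hcompl : Q.real {s | Q.real (Iio s) ≤ p}ᶜ ≤ Q.real univ - p := by
    refine ENNReal.toReal_le_of_le_ofReal (by linarith)
      (measure_le_of_forall_measure_Ici_le hmeas.compl fun x hx => ?_)
    rw [← ofReal_measureReal, ← compl_Iio, measureReal_compl measurableSet_Iio]
    have hx' : p < Q.real (Iio x) := not_le.1 hx
    exact ENNReal.ofReal_le_ofReal (by linarith)
  rw [measureReal_compl hmeas] at hcompl
  linarith

end CDF

def HasFiniteBrackets {α : Type*} [MeasurableSpace α] (μ : Measure α) (𝒜 : Set (Set α)) :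
    Prop :=
  ∀ ε : ℝ≥0∞, 0 < ε → ∃ ℱ : Set (Set α), ℱ.Finite ∧ (∀ B ∈ ℱ, MeasurableSet B) ∧
    ∀ A ∈ 𝒜, (∃ B ∈ ℱ, A ⊆ B ∧ μ (B \ A) ≤ ε) ∧ (∃ B ∈ ℱ, B ⊆ A ∧ μ (A \ B) ≤ ε)

section Diff

variable {α : Type*} [MeasurableSpace α] (μ : Measure α)

theorem measure_inter_diff_inter_le (s s' t t' : Set α) :
    μ ((s ∩ t) \ (s' ∩ t')) ≤ μ (s \ s') + μ (t \ t') := by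
  refine (measure_mono ?_).trans (measure_union_le _ _)
  rintro x ⟨⟨hs, ht⟩, hst⟩
  by_cases hs' : x ∈ s'
  · exact .inr ⟨ht, fun ht' => hst ⟨hs', ht'⟩⟩
  · exact .inl ⟨hs, hs'⟩

theorem measure_iInter_diff_iInter_le {ι : Type*} [Fintype ι] (s t : ι → Set α) :
    μ ((⋂ i, s i) \ ⋂ i, t i) ≤ ∑ i, μ (s i \ t i) := by
  refine (measure_mono ?_).trans (measure_iUnion_fintype_le μ _)
  rintro x ⟨hs, ht⟩
  obtain ⟨i, hi⟩ := not_forall.1 (mt mem_iInter.2 ht)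
  exact mem_iUnion.2 ⟨i, mem_iInter.1 hs i, hi⟩

end Diff

namespace HasFiniteBrackets

variable {α β : Type*} [MeasurableSpace α] [MeasurableSpace β] {μ : Measure α}
  {𝒜 ℬ : Set (Set α)}

theorem mono (h : HasFiniteBrackets μ 𝒜) (hℬ : ℬ ⊆ 𝒜) : HasFiniteBrackets μ ℬ := fun ε hε =>
  let ⟨ℱ, hfin, hmeas, hbr⟩ := h ε hε
  ⟨ℱ, hfin, hmeas, fun A hA => hbr A (hℬ hA)⟩

theorem of_finite (hfin : 𝒜.Finite) (hmeas : ∀ A ∈ 𝒜, MeasurableSet A) :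
    HasFiniteBrackets μ 𝒜 := fun _ _ =>
  ⟨𝒜, hfin, hmeas, fun A hA => ⟨⟨A, hA, subset_rfl, by simp⟩, ⟨A, hA, subset_rfl, by simp⟩⟩⟩

theorem union (h𝒜 : HasFiniteBrackets μ 𝒜) (hℬ : HasFiniteBrackets μ ℬ) :
    HasFiniteBrackets μ (𝒜 ∪ ℬ) := by
  intro ε hε
  obtain ⟨ℱ, hfin, hmeas, hbr⟩ := h𝒜 ε hε
  obtain ⟨𝒢, hfin', hmeas', hbr'⟩ := hℬ ε hε
  refine ⟨ℱ ∪ 𝒢, hfin.union hfin', fun B hB => hB.elim (hmeas B) (hmeas' B), ?_⟩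
  rintro A (hA | hA)
  · obtain ⟨⟨U, hU, hAU, hUA⟩, ⟨L, hL, hLA, hAL⟩⟩ := hbr A hA
    exact ⟨⟨U, .inl hU, hAU, hUA⟩, ⟨L, .inl hL, hLA, hAL⟩⟩
  · obtain ⟨⟨U, hU, hAU, hUA⟩, ⟨L, hL, hLA, hAL⟩⟩ := hbr' A hA
    exact ⟨⟨U, .inr hU, hAU, hUA⟩, ⟨L, .inr hL, hLA, hAL⟩⟩

theorem compl (h : HasFiniteBrackets μ 𝒜) : HasFiniteBrackets μ ((·ᶜ) '' 𝒜) := by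
  intro ε hε
  obtain ⟨ℱ, hfin, hmeas, hbr⟩ := h ε hε
  refine ⟨(·ᶜ) '' ℱ, hfin.image _, ?_, ?_⟩
  · rintro _ ⟨B, hB, rfl⟩
    exact (hmeas B hB).compl
  · rintro _ ⟨A, hA, rfl⟩
    obtain ⟨⟨U, hU, hAU, hUA⟩, ⟨L, hL, hLA, hAL⟩⟩ := hbr A hA
    refine ⟨⟨Lᶜ, mem_image_of_mem _ hL, compl_subset_compl.2 hLA, ?_⟩,
      ⟨Uᶜ, mem_image_of_mem _ hU, compl_subset_compl.2 hAU, ?_⟩⟩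
    · rwa [compl_sdiff_compl]
    · rwa [compl_sdiff_compl]

theorem preimage {f : α → β} (hf : Measurable f) {𝒜 : Set (Set β)}
    (h : HasFiniteBrackets (μ.map f) 𝒜) : HasFiniteBrackets μ ((f ⁻¹' ·) '' 𝒜) := by
  intro ε hε
  obtain ⟨ℱ, hfin, hmeas, hbr⟩ := h ε hε
  refine ⟨(f ⁻¹' ·) '' ℱ, hfin.image _, ?_, ?_⟩
  · rintro _ ⟨B, hB, rfl⟩
    exact hf (hmeas B hB)
  · rintro _ ⟨A, hA, rfl⟩
    obtain ⟨⟨U, hU, hAU, hUA⟩, ⟨L, hL, hLA, hAL⟩⟩ := hbr A hA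
    exact ⟨⟨f ⁻¹' U, mem_image_of_mem _ hU, preimage_mono hAU,
        (Measure.le_map_apply hf.aemeasurable (U \ A)).trans hUA⟩,
      ⟨f ⁻¹' L, mem_image_of_mem _ hL, preimage_mono hLA,
        (Measure.le_map_apply hf.aemeasurable (A \ L)).trans hAL⟩⟩

theorem inter (h𝒜 : HasFiniteBrackets μ 𝒜) (hℬ : HasFiniteBrackets μ ℬ) :
    HasFiniteBrackets μ (image2 (· ∩ ·) 𝒜 ℬ) := by
  intro ε hε
  obtain ⟨ℱ, hfin, hmeas, hbr⟩ := h𝒜 (ε / 2) (ENNReal.half_pos hε.ne')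
  obtain ⟨𝒢, hfin', hmeas', hbr'⟩ := hℬ (ε / 2) (ENNReal.half_pos hε.ne')
  refine ⟨image2 (· ∩ ·) ℱ 𝒢, hfin.image2 _ hfin', ?_, ?_⟩
  · rintro _ ⟨B, hB, C, hC, rfl⟩
    exact (hmeas B hB).inter (hmeas' C hC)
  · rintro _ ⟨A, hA, A', hA', rfl⟩
    obtain ⟨⟨U, hU, hAU, hUA⟩, ⟨L, hL, hLA, hAL⟩⟩ := hbr A hA
    obtain ⟨⟨U', hU', hAU', hUA'⟩, ⟨L', hL', hLA', hAL'⟩⟩ := hbr' A' hA'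
    refine ⟨⟨U ∩ U', mem_image2_of_mem hU hU', inter_subset_inter hAU hAU', ?_⟩,
      ⟨L ∩ L', mem_image2_of_mem hL hL', inter_subset_inter hLA hLA', ?_⟩⟩
    · exact (measure_inter_diff_inter_le μ _ _ _ _).trans
        ((add_le_add hUA hUA').trans (ENNReal.add_halves ε).le)
    · exact (measure_inter_diff_inter_le μ _ _ _ _).trans
        ((add_le_add hAL hAL').trans (ENNReal.add_halves ε).le)

theorem iInter {ι : Type*} [Fintype ι] {𝒜 : ι → Set (Set α)}
    (h : ∀ i, HasFiniteBrackets μ (𝒜 i)) :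
    HasFiniteBrackets μ ((fun A => ⋂ i, A i) '' univ.pi 𝒜) := by
  intro ε hε
  have hε' : 0 < ε / Fintype.card ι := ENNReal.div_pos hε.ne' (ENNReal.natCast_ne_top _)
  have hsum : ∑ _i : ι, ε / Fintype.card ι ≤ ε := by
    simpa [Finset.sum_const, nsmul_eq_mul] using ENNReal.mul_div_le
  choose ℱ hfin hmeas hbr using fun i => h i _ hε'
  refine ⟨(fun B => ⋂ i, B i) '' univ.pi ℱ, (Set.Finite.pi hfin).image _, ?_, ?_⟩
  · rintro _ ⟨B, hB, rfl⟩
    exact .iInter fun i => hmeas i _ (hB i trivial)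
  · rintro _ ⟨A, hA, rfl⟩
    choose U hU hAU hUA using fun i => (hbr i (A i) (hA i trivial)).1
    choose L hL hLA hAL using fun i => (hbr i (A i) (hA i trivial)).2
    refine ⟨⟨_, ⟨U, fun i _ => hU i, rfl⟩, iInter_mono hAU, ?_⟩,
      ⟨_, ⟨L, fun i _ => hL i, rfl⟩, iInter_mono hLA, ?_⟩⟩
    · exact (measure_iInter_diff_iInter_le μ _ _).trans
        ((Finset.sum_le_sum fun i _ => hUA i).trans hsum)
    · exact (measure_iInter_diff_iInter_le μ _ _).trans
        ((Finset.sum_le_sum fun i _ => hAL i).trans hsum)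

end HasFiniteBrackets

/-- The brackets of `Iic t` are level sets of `F s = Q (Iic s)` and of its left limit
`s ↦ Q (Iio s)` at the finitely many levels `k r`, `k ≤ ⌈Q ℝ / r⌉`, where `0 < r ≤ ε`. -/
theorem hasFiniteBrackets_Iic (Q : Measure ℝ) [IsFiniteMeasure Q] :
    HasFiniteBrackets Q (range Iic) := by
  intro ε hε
  obtain ⟨r, -, hr, hrε⟩ := ENNReal.lt_iff_exists_real_btwn.1 hε
  have hr : 0 < r := ENNReal.ofReal_pos.1 hr
  set F : ℝ → ℝ := fun s => Q.real (Iic s)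
  have hF : Monotone F := monotone_measureReal_Iic Q
  have hL : ∀ k : ℕ, MeasurableSet {s | Q.real (Iio s) ≤ k * r - r} := fun _ =>
    measurableSet_le (monotone_measureReal_Iio Q).measurable measurable_const
  set U : ℕ → Set ℝ := fun k => {s | F s < k * r + r}
  set L : ℕ → Set ℝ := fun k => {s | Q.real (Iio s) ≤ k * r - r}
  set N := ⌈Q.real univ / r⌉₊
  have hFt : ∀ t, F t / r ≤ Q.real univ / r := fun t =>
    div_le_div_of_nonneg_right (measureReal_mono (subset_univ _)) hr.le
  have hsmall : ∀ {A B : Set ℝ}, B ⊆ A → MeasurableSet B → Q.real A - Q.real B ≤ r →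
      Q (A \ B) ≤ ε := fun hBA hB h => by
    rw [← ofReal_measureReal, measureReal_sdiff hBA hB]
    exact (ENNReal.ofReal_le_ofReal h).trans hrε.le
  refine ⟨U '' Iic N ∪ L '' Iic N, ((finite_Iic N).image _).union ((finite_Iic N).image _),
    ?_, ?_⟩
  · rintro _ (⟨k, -, rfl⟩ | ⟨k, -, rfl⟩)
    · exact measurableSet_lt hF.measurable measurable_const
    · exact hL k
  rintro _ ⟨t, rfl⟩
  constructor
  · set k := ⌊F t / r⌋₊
    have hk : k * r ≤ F t := (le_div_iff₀ hr).1 (Nat.floor_le (by positivity))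
    have hk' : F t < k * r + r := by
      have := Nat.lt_floor_add_one (F t / r)
      rw [div_lt_iff₀ hr] at this
      linarith
    refine ⟨U k, .inl ⟨k, (Nat.floor_mono (hFt t)).trans (Nat.floor_le_ceil _), rfl⟩,
      fun s hs => (hF hs).trans_lt hk', hsmall (fun s hs => (hF hs).trans_lt hk')
        measurableSet_Iic ?_⟩
    linarith [measureReal_setOf_measureReal_Iic_lt_le Q (by positivity : 0 ≤ k * r + r)]
  · set k := ⌈F t / r⌉₊
    have hk : F t ≤ k * r := (div_le_iff₀ hr).1 (Nat.le_ceil _)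
    have hk' : k * r - r < F t := by
      have := Nat.ceil_lt_add_one (by positivity : 0 ≤ F t / r)
      rw [← sub_lt_iff_lt_add, lt_div_iff₀ hr] at this
      linarith
    have hLt : L k ⊆ Iic t := fun s hs => not_lt.1 fun hts =>
      (hk'.trans_le (measureReal_mono (Iic_subset_Iio.2 hts))).not_ge hs
    refine ⟨L k, .inr ⟨k, Nat.ceil_mono (hFt t), rfl⟩, hLt, hsmall hLt (hL k) ?_⟩
    have := le_measureReal_setOf_measureReal_Iio_le Q
      (hk'.le.trans (measureReal_mono (subset_univ (Iic t))))
    linarith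

theorem hasFiniteBrackets_prod_Iic {δ ι : Type*} [Finite δ] [MeasurableSpace δ]
    [MeasurableSingletonClass δ] [Fintype ι] (P : Measure (δ × (ι → ℝ))) [IsFiniteMeasure P] :
    HasFiniteBrackets P {S | ∃ (D : Set δ) (c : ι → ℝ), S = D ×ˢ Iic c} := by
  have hcoord : ∀ j, HasFiniteBrackets (P.map Prod.snd) ((Function.eval j ⁻¹' ·) '' range Iic) :=
    fun j => .preimage (measurable_pi_apply j) (hasFiniteBrackets_Iic _)
  have hD : HasFiniteBrackets P ((Prod.fst ⁻¹' ·) '' (univ : Set (Set δ))) :=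
    .of_finite (finite_univ.image _) (by
      rintro _ ⟨D, -, rfl⟩
      exact D.toFinite.measurableSet.preimage measurable_fst)
  refine (hD.inter ((HasFiniteBrackets.iInter hcoord).preimage measurable_snd)).mono ?_
  rintro _ ⟨D, c, rfl⟩
  refine ⟨_, mem_image_of_mem _ (mem_univ D), _,
    mem_image_of_mem _ (mem_image_of_mem _ fun j _ => mem_image_of_mem _ (mem_range_self (c j))),
    ?_⟩
  ext ⟨x, y⟩
  simp [Pi.le_def]

theorem hasFiniteBrackets_prod_Iic_or_compl {δ ι : Type*} [Finite δ] [MeasurableSpace δ]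
    [MeasurableSingletonClass δ] [Fintype ι] (P : Measure (δ × (ι → ℝ))) [IsFiniteMeasure P] :
    HasFiniteBrackets P
      {S | ∃ (D : Set δ) (c : ι → ℝ), S = D ×ˢ Iic c ∨ S = (D ×ˢ Iic c)ᶜ} := by
  refine ((hasFiniteBrackets_prod_Iic P).union (hasFiniteBrackets_prod_Iic P).compl).mono ?_
  rintro _ ⟨D, c, rfl | rfl⟩
  · exact .inl ⟨D, c, rfl⟩
  · exact .inr ⟨_, ⟨D, c, rfl⟩, rfl⟩

noncomputable def empiricalProb {Ω α : Type*} (Y : ℕ → Ω → α) (n : ℕ) (ω : Ω) (A : Set α) : ℝ :=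
  (∑ i ∈ Finset.range n, A.indicator (fun _ => (1 : ℝ)) (Y i ω)) / n

section Empirical

variable {Ω α : Type*} {Y : ℕ → Ω → α} {n : ℕ} {ω : Ω} {A B L U : Set α}

theorem empiricalProb_nonneg : 0 ≤ empiricalProb Y n ω A :=
  div_nonneg (Finset.sum_nonneg fun _ _ => indicator_nonneg (fun _ _ => zero_le_one) _)
    n.cast_nonneg

theorem empiricalProb_le_one : empiricalProb Y n ω A ≤ 1 := by
  refine div_le_one_of_le₀ ?_ n.cast_nonneg
  calc ∑ i ∈ Finset.range n, A.indicator (fun _ => (1 : ℝ)) (Y i ω)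
      ≤ ∑ _i ∈ Finset.range n, (1 : ℝ) :=
        Finset.sum_le_sum fun _ _ => indicator_le_self' (fun _ _ => zero_le_one) _
    _ = n := by simp

theorem empiricalProb_mono (hAB : A ⊆ B) : empiricalProb Y n ω A ≤ empiricalProb Y n ω B :=
  div_le_div_of_nonneg_right (Finset.sum_le_sum fun _ _ =>
    indicator_le_indicator_of_subset hAB (fun _ => zero_le_one) _) n.cast_nonneg

variable [MeasurableSpace α] {P : Measure α}

theorem measureReal_le_add_measureReal_sdiff [IsFiniteMeasure P] (s t : Set α) :
    P.real s ≤ P.real t + P.real (s \ t) :=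
  (measureReal_mono (subset_sdiff_union s t)).trans ((measureReal_union_le _ _).trans_eq
    (add_comm _ _))

theorem abs_empiricalProb_sub_le_of_subset_of_subset [IsFiniteMeasure P] {a b : ℝ}
    (hLA : L ⊆ A) (hAU : A ⊆ U) (hL : |empiricalProb Y n ω L - P.real L| ≤ a)
    (hU : |empiricalProb Y n ω U - P.real U| ≤ a) (hAL : P.real (A \ L) ≤ b)
    (hUA : P.real (U \ A) ≤ b) : |empiricalProb Y n ω A - P.real A| ≤ a + b := by
  have := empiricalProb_mono (Y := Y) (n := n) (ω := ω) hLA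
  have := empiricalProb_mono (Y := Y) (n := n) (ω := ω) hAU
  have := measureReal_le_add_measureReal_sdiff (P := P) A L
  have := measureReal_le_add_measureReal_sdiff (P := P) U A
  rw [abs_le] at *
  constructor <;> linarith

variable [MeasurableSpace Ω] {μ : Measure Ω}

theorem tendstoInMeasure_empiricalProb (hY : ∀ i, Measurable (Y i))
    (hindep : ProbabilityTheory.iIndepFun Y μ) (hident : ∀ i, μ.map (Y i) = P)
    (hB : MeasurableSet B) [IsProbabilityMeasure μ] :
    TendstoInMeasure μ (fun n ω => empiricalProb Y n ω B) atTop (fun _ => P.real B) := by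
  set φ : α → ℝ := B.indicator fun _ => 1
  have hφ : Measurable φ := measurable_const.indicator hB
  have hX : ∀ i, Measurable (φ ∘ Y i) := fun i => hφ.comp (hY i)
  have hint : Integrable (φ ∘ Y 0) μ :=
    .of_bound (hX 0).aestronglyMeasurable 1 (ae_of_all _ fun ω => by
      simp only [Function.comp_apply, φ]
      by_cases h : Y 0 ω ∈ B <;> simp [h])
  have hident' : ∀ i, ProbabilityTheory.IdentDistrib (φ ∘ Y i) (φ ∘ Y 0) μ μ := fun i =>
    ⟨(hX i).aemeasurable, (hX 0).aemeasurable, by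
      rw [← Measure.map_map hφ (hY i), ← Measure.map_map hφ (hY 0), hident i, hident 0]⟩
  have hmean : ∫ ω, φ (Y 0 ω) ∂μ = P.real B := by
    rw [← integral_map (hY 0).aemeasurable hφ.aestronglyMeasurable, hident 0,
      integral_indicator_const (1 : ℝ) hB, smul_eq_mul, mul_one]
  refine tendstoInMeasure_of_tendsto_ae (fun n => ?_) ?_
  · exact ((Finset.measurable_sum _ fun i _ => hX i).div_const _).aestronglyMeasurable
  · have hslln := ProbabilityTheory.strong_law_ae_real _ hint
      (fun i j hij => (hindep.indepFun hij).comp hφ hφ) hident'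
    rw [Function.comp_def, hmean] at hslln
    exact hslln

theorem tendsto_measure_forall_abs_empiricalProb_sub_le [IsProbabilityMeasure μ]
    [IsProbabilityMeasure P] (hY : ∀ i, Measurable (Y i))
    (hindep : ProbabilityTheory.iIndepFun Y μ) (hident : ∀ i, μ.map (Y i) = P)
    {𝒜 : Set (Set α)} (h𝒜 : HasFiniteBrackets P 𝒜) {ε : ℝ} (hε : 0 < ε) :
    Tendsto (fun n => μ {ω | ∀ A ∈ 𝒜, |empiricalProb Y n ω A - P.real A| ≤ ε}) atTop (𝓝 1) := by
  obtain ⟨ℱ, hfin, hmeas, hbr⟩ := h𝒜 (ENNReal.ofReal (ε / 2)) (by simp [hε])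
  set bad : ℕ → Set α → Set Ω := fun n B => {ω | ε / 2 ≤ |empiricalProb Y n ω B - P.real B|}
  have hbad : Tendsto (fun n => ∑ B ∈ hfin.toFinset, μ (bad n B)) atTop (𝓝 0) := by
    simpa only [Finset.sum_const_zero, Real.dist_eq] using tendsto_finsetSum _ fun B hB =>
      tendstoInMeasure_iff_dist.1 (tendstoInMeasure_empiricalProb hY hindep hident
        (hmeas B (hfin.mem_toFinset.1 hB))) (ε / 2) (half_pos hε)
  have hcover : ∀ n, {ω | ∀ A ∈ 𝒜, |empiricalProb Y n ω A - P.real A| ≤ ε}ᶜ ⊆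
      ⋃ B ∈ hfin.toFinset, bad n B := by
    intro n ω hω
    by_contra hgood
    simp only [mem_iUnion, Set.Finite.mem_toFinset, not_exists, bad, mem_ofPred_eq, not_le] at hgood
    refine hω fun A hA => ?_
    obtain ⟨⟨U, hU, hAU, hUA⟩, ⟨L, hL, hLA, hAL⟩⟩ := hbr A hA
    simpa using abs_empiricalProb_sub_le_of_subset_of_subset hLA hAU (hgood L hL).le
      (hgood U hU).le (ENNReal.toReal_le_of_le_ofReal (half_pos hε).le hAL)
      (ENNReal.toReal_le_of_le_ofReal (half_pos hε).le hUA)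
  refine tendsto_of_tendsto_of_tendsto_of_le_of_le (g := fun n => 1 - ∑ B ∈ hfin.toFinset,
    μ (bad n B)) ?_ tendsto_const_nhds (fun n => ?_) fun _ => prob_le_one
  · simpa using ENNReal.Tendsto.sub tendsto_const_nhds hbad (.inl ENNReal.one_ne_top)
  · calc 1 - ∑ B ∈ hfin.toFinset, μ (bad n B)
        ≤ μ univ - μ {ω | ∀ A ∈ 𝒜, |empiricalProb Y n ω A - P.real A| ≤ ε}ᶜ :=
          tsub_le_tsub measure_univ.ge
            ((measure_mono (hcover n)).trans (measure_biUnion_finset_le _ _))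
      _ ≤ μ (univ \ {ω | ∀ A ∈ 𝒜, |empiricalProb Y n ω A - P.real A| ≤ ε}ᶜ) := le_measure_sdiff
      _ = _ := by rw [Set.sdiff_compl, univ_inter]

end Empirical

theorem le_sSup_of_nonpos_of_forall_le {S : Set ℝ} {b : ℝ} (hb : b ≤ 0) (h : ∀ x ∈ S, b ≤ x) :
    b ≤ sSup S := by
  by_cases hS : BddAbove S ∧ S.Nonempty
  · obtain ⟨x, hx⟩ := hS.2
    exact (h x hx).trans (le_csSup hS.1 hx)
  · rcases not_and_or.1 hS with hS | hS
    · rwa [Real.sSup_of_not_bddAbove hS]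
    · rwa [not_nonempty_iff_eq_empty.1 hS, Real.sSup_empty]

noncomputable def quantile {Ω : Type*} [MeasurableSpace Ω] (μ : Measure Ω) (X : Ω → ℝ)
    (p : ℝ≥0∞) : ℝ :=
  sInf {x : ℝ | μ {ω | X ω ≤ x} ≥ p}

theorem quantile_le_of_forall_mem_le {Ω : Type*} [MeasurableSpace Ω] {μ : Measure Ω}
    {X : Ω → ℝ} {p : ℝ≥0∞} {W : Set Ω} {x : ℝ} (hX : BddBelow (range X)) (hp : p ≠ 0)
    (hW : p ≤ μ W) (hx : ∀ ω ∈ W, X ω ≤ x) : quantile μ X p ≤ x := by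
  refine csInf_le ?_ (hW.trans (measure_mono hx))
  obtain ⟨b, hb⟩ := hX
  refine ⟨b, fun y hy => ?_⟩
  obtain ⟨ω, hω⟩ := nonempty_of_measure_ne_zero (hp.bot_lt.trans_le hy).ne'
  exact (hb (mem_range_self ω)).trans hω

theorem tendsto_toReal_measure_of_eventually_subset {Ω ι : Type*} [MeasurableSpace Ω]
    {μ : Measure Ω} [IsProbabilityMeasure μ] {l : Filter ι} {W R : ι → Set Ω}
    (hW : Tendsto (fun i => μ (W i)) l (𝓝 1)) (hWR : ∀ᶠ i in l, W i ⊆ R i) :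
    Tendsto (fun i => (μ (R i)).toReal) l (𝓝 1) :=
  (ENNReal.tendsto_toReal ENNReal.one_ne_top).comp <| tendsto_of_tendsto_of_tendsto_of_le_of_le'
    hW tendsto_const_nhds (hWR.mono fun _ h => measure_mono h) (.of_forall fun _ => prob_le_one)

theorem stmt_16_general {XD : Type*} [Fintype XD] [MeasurableSpace XD] [MeasurableSingletonClass XD]
    {dC du : ℕ}
    (P : Measure (XD × (Fin dC → ℝ))) [IsProbabilityMeasure P]
    (ν : Measure (Fin du → ℝ))
    (Γ : (XD × (Fin dC → ℝ)) → Set (Fin du → ℝ))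
    {Ω : Type*} [MeasurableSpace Ω] (μ : Measure Ω) [IsProbabilityMeasure μ]
    (Y : ℕ → Ω → XD × (Fin dC → ℝ)) (hYmeas : ∀ i, Measurable (Y i))
    (hYindep : ProbabilityTheory.iIndepFun Y μ)
    (hYident : ∀ i, μ.map (Y i) = P)
    -- the class C of sets A_D × (−∞, c] and their complements
    (𝓒 : Set (Set (XD × (Fin dC → ℝ))))
    (h𝓒 : 𝓒 = {S | ∃ (AD : Set XD) (c : Fin dC → ℝ),
      S = AD ×ˢ Set.Iic c ∨ S = (AD ×ˢ Set.Iic c)ᶜ})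
    -- m(A) = ν(Γ(A)), outer measure of the image of A by Γ
    (m : Set (XD × (Fin dC → ℝ)) → ℝ)
    (hm : ∀ A, m A = (ν (⋃ a ∈ A, Γ a)).toReal)
    -- the alternative hypothesis H_a: failure of internal consistency on the class 𝓒
    (halt : ∃ A ∈ 𝓒, (P A).toReal > m A)
    -- empirical measure and empirical process
    (Pn : ℕ → Ω → Set (XD × (Fin dC → ℝ)) → ℝ)
    (hPn : ∀ n ω A,
      Pn n ω A = (∑ i ∈ Finset.range n, A.indicator (fun _ => (1:ℝ)) (Y i ω)) / n)
    (Gn : ℕ → Ω → Set (XD × (Fin dC → ℝ)) → ℝ)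
    (hGn : ∀ n ω A, Gn n ω A = Real.sqrt (n : ℝ) * (Pn n ω A - (P A).toReal))
    -- test statistic, localized statistic and its quantile
    (T : ℕ → Ω → ℝ)
    (hT : ∀ n ω, T n ω = Real.sqrt (n : ℝ) * sSup {x : ℝ | ∃ A ∈ 𝓒, x = Pn n ω A - m A})
    (h : ℕ → ℝ)
    (Ttil : ℕ → Ω → ℝ)
    (hTtil : ∀ n ω,
      Ttil n ω = sSup {x : ℝ | ∃ A ∈ 𝓒, Pn n ω A ≥ m A - h n ∧ x = Gn n ω A})
    (α : ℝ) (hα : α ∈ Set.Ioo (0:ℝ) 1)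
    (c : ℕ → ℝ)
    (hc : ∀ n, c n = sInf {x : ℝ | μ {ω | Ttil n ω ≤ x} ≥ ENNReal.ofReal (1 - α)}) :
    Tendsto (fun n : ℕ => (μ {ω | T n ω ≥ c n}).toReal) atTop (nhds 1) := by
  obtain ⟨A₀, hA₀, hgt⟩ := halt
  obtain rfl : Pn = empiricalProb Y := funext fun n => funext fun ω => funext (hPn n ω)
  simp only [← measureReal_def] at hgt hGn hm
  set δ := P.real A₀ - m A₀
  set W : ℕ → Set Ω := fun n => {ω | ∀ A ∈ 𝓒, |empiricalProb Y n ω A - P.real A| ≤ δ / 4}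
  have hW : Tendsto (fun n => μ (W n)) atTop (𝓝 1) :=
    tendsto_measure_forall_abs_empiricalProb_sub_le hYmeas hYindep hYident
      (h𝓒 ▸ hasFiniteBrackets_prod_Iic_or_compl P) (by simp only [δ]; linarith)
  refine tendsto_toReal_measure_of_eventually_subset hW ?_
  filter_upwards [hW.eventually (lt_mem_nhds (ENNReal.ofReal_lt_one.2 (sub_lt_self 1 hα.1)))]
    with n hWn ω hω
  have hTtil_ge : ∀ ω, -√n ≤ Ttil n ω := fun ω => by
    rw [hTtil]
    refine le_sSup_of_nonpos_of_forall_le (by simp) ?_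
    rintro _ ⟨A, -, -, rfl⟩
    rw [hGn]
    nlinarith [Real.sqrt_nonneg n, empiricalProb_nonneg (Y := Y) (n := n) (ω := ω) (A := A),
      measureReal_le_one (μ := P) (s := A)]
  have hTtil_le : ∀ ω ∈ W n, Ttil n ω ≤ √n * (δ / 4) := fun ω hω => by
    rw [hTtil]
    refine Real.sSup_le ?_ (by positivity)
    rintro _ ⟨A, hA, -, rfl⟩
    rw [hGn]
    exact mul_le_mul_of_nonneg_left (abs_le.1 (hω A hA)).2 (Real.sqrt_nonneg _)
  have hc_le : c n ≤ √n * (δ / 4) := (hc n).trans_le <| quantile_le_of_forall_mem_le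
    ⟨-√n, forall_mem_range.2 hTtil_ge⟩ (by simpa using hα.2) hWn.le hTtil_le
  have hT_ge : √n * (δ / 4) ≤ T n ω := by
    have hbdd : BddAbove {x | ∃ A ∈ 𝓒, x = empiricalProb Y n ω A - m A} := by
      refine ⟨1, ?_⟩
      rintro _ ⟨A, -, rfl⟩
      linarith [empiricalProb_le_one (Y := Y) (n := n) (ω := ω) (A := A),
        (hm A).symm ▸ measureReal_nonneg (μ := ν)]
    rw [hT]
    refine mul_le_mul_of_nonneg_left (le_trans ?_ (le_csSup hbdd ⟨A₀, hA₀, rfl⟩))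
      (Real.sqrt_nonneg _)
    linarith [(abs_le.1 (hω A₀ hA₀)).1]
  exact hc_le.trans hT_ge

/-- Theorem 3 of the paper: consistency of the test of internal
consistency. The observable Y = (D, C) has a discrete component D in the finite set 𝔛_D
and a continuous component C of dimension d_C; P is its law (either supported on a
finite set or with a density with respect to counting ⊗ Lebesgue measure); the structure
(P, Γ, ν) is internally consistent. C is the class of sets A_D × (−∞, c] and their
complements; m(A) = ν(Γ(A)) (ν-outer measure of the image Γ(A) = ⋃_{a ∈ A} Γ(a));
P_n is the empirical measure of an i.i.d. sample from P, G_n(A) = √n (P_n(A) − P(A)),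
T_n = √n sup_{A ∈ C} [P_n(A) − m(A)], T̃_n = sup over the estimated class
C_{h_n} = {A ∈ C : P_n(A) ≥ m(A) − h_n} of G_n(A), and c_n^α is the (1−α)-quantile of
T̃_n. Under Assumption 1 (the Hausdorff separation condition on the binding class) and
Assumption 2 (h_n ln ln n + h_n⁻¹ √(ln ln n / n) → 0), if the alternative hypothesis
H_a holds, i.e. some A ∈ C has P(A) > ν(Γ(A)), then Pr(T_n ≥ c_n^α) → 1. -/
theorem stmt_16 {XD : Type*} [Fintype XD] [MeasurableSpace XD] [MeasurableSingletonClass XD]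
    [MetricSpace XD] {dC du : ℕ}
    (P : Measure (XD × (Fin dC → ℝ))) [IsProbabilityMeasure P]
    (hP : (∃ S : Set (XD × (Fin dC → ℝ)), S.Finite ∧ P S = 1) ∨
      P ≪ (Measure.count : Measure XD).prod (volume : Measure (Fin dC → ℝ)))
    (ν : Measure (Fin du → ℝ)) [IsProbabilityMeasure ν]
    (Γ : (XD × (Fin dC → ℝ)) → Set (Fin du → ℝ))
    (hΓmeas : ∀ O : Set (Fin du → ℝ), IsOpen O → MeasurableSet {y | (Γ y ∩ O).Nonempty})
    (hΓne : ∀ y, (Γ y).Nonempty) (hΓcl : ∀ y, IsClosed (Γ y))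
    {Ω : Type*} [MeasurableSpace Ω] (μ : Measure Ω) [IsProbabilityMeasure μ]
    (Y : ℕ → Ω → XD × (Fin dC → ℝ)) (hYmeas : ∀ i, Measurable (Y i))
    (hYindep : ProbabilityTheory.iIndepFun Y μ)
    (hYident : ∀ i, μ.map (Y i) = P)
    -- the class C of sets A_D × (−∞, c] and their complements
    (𝓒 : Set (Set (XD × (Fin dC → ℝ))))
    (h𝓒 : 𝓒 = {S | ∃ (AD : Set XD) (c : Fin dC → ℝ),
      S = AD ×ˢ Set.Iic c ∨ S = (AD ×ˢ Set.Iic c)ᶜ})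
    -- m(A) = ν(Γ(A)), outer measure of the image of A by Γ
    (m : Set (XD × (Fin dC → ℝ)) → ℝ)
    (hm : ∀ A, m A = (ν (⋃ a ∈ A, Γ a)).toReal)
    -- the alternative hypothesis H_a: failure of internal consistency on the class 𝓒
    (halt : ∃ A ∈ 𝓒, (P A).toReal > m A)
    -- empirical measure and empirical process
    (Pn : ℕ → Ω → Set (XD × (Fin dC → ℝ)) → ℝ)
    (hPn : ∀ n ω A,
      Pn n ω A = (∑ i ∈ Finset.range n, A.indicator (fun _ => (1:ℝ)) (Y i ω)) / n)
    (Gn : ℕ → Ω → Set (XD × (Fin dC → ℝ)) → ℝ)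
    (hGn : ∀ n ω A, Gn n ω A = Real.sqrt (n : ℝ) * (Pn n ω A - (P A).toReal))
    -- test statistic, localized statistic and its quantile
    (T : ℕ → Ω → ℝ)
    (hT : ∀ n ω, T n ω = Real.sqrt (n : ℝ) * sSup {x : ℝ | ∃ A ∈ 𝓒, x = Pn n ω A - m A})
    (h : ℕ → ℝ)
    (Ttil : ℕ → Ω → ℝ)
    (hTtil : ∀ n ω,
      Ttil n ω = sSup {x : ℝ | ∃ A ∈ 𝓒, Pn n ω A ≥ m A - h n ∧ x = Gn n ω A})
    (α : ℝ) (hα : α ∈ Set.Ioo (0:ℝ) 1)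
    (c : ℕ → ℝ)
    (hc : ∀ n, c n = sInf {x : ℝ | μ {ω | Ttil n ω ≤ x} ≥ ENNReal.ofReal (1 - α)})
    -- Assumption 1: Hausdorff separation of the binding class
    (hA1 : ∃ K > (0:ℝ), ∃ η ∈ Set.Ioo (0:ℝ) 1, ∃ h₀ > (0:ℝ),
      ∀ hh ∈ Set.Ioc (0:ℝ) h₀, ∀ A ∈ 𝓒, (P A).toReal ≥ m A - hh →
        ∃ Ab ∈ 𝓒, (P Ab).toReal = m Ab ∧ Ab ⊆ A ∧
          Metric.hausdorffDist A Ab ≤ K * hh ^ η)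
    -- Assumption 2: rate condition on the bandwidth
    (hA2pos : ∀ n, 0 < h n)
    (hA2 : Tendsto (fun n : ℕ => h n * Real.log (Real.log n) +
        (h n)⁻¹ * Real.sqrt (Real.log (Real.log n) / n)) atTop (nhds 0)) :
    Tendsto (fun n : ℕ => (μ {ω | T n ω ≥ c n}).toReal) atTop (nhds 1) :=
  stmt_16_general P ν Γ μ Y hYmeas hYindep hYident 𝓒 h𝓒 m hm halt Pn hPn Gn hGn T hT h Ttil hTtil α
    hα c hc
end
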